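/- arXiv:2312.06513 — 7 statements merged into one kernel-verified Lean document; each statement's English description precedes it below -/
import Mathlib

section
/- Let w be a valid weight function of a contiguous integral deformation of the braid arrangement on {1,…,n}, and let C = (i₀, i₁, …, i_k) be an m-ascending directed cycle of minimum length among all m-ascending directed cycles of w. Then for every pair of vertices i_r, i_s of C that are not cyclically consecutive on C, at least one of w(i_r, i_s) and w(i_s, i_r) equals −∞. -/
/-- Cyclically consecutive pairs along a list of vertices. -/
def cpairs {n : ℕ} (c : List (Fin n)) : List (Fin n × Fin n) := c.zip (c.rotate 1)

/-- `c` is a directed cycle of the weighted digraph `w`, an edge `u → v`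
being present when `w u v ≠ ⊥` (`⊥` stands for `-∞`). -/
def IsCycle {n : ℕ} (w : Fin n → Fin n → WithBot ℤ) (c : List (Fin n)) : Prop :=
  2 ≤ c.length ∧ c.Nodup ∧ ∀ p ∈ cpairs c, w p.1 p.2 ≠ ⊥

/-- Total weight of the edges of a cycle. -/
def cycWeight {n : ℕ} (w : Fin n → Fin n → WithBot ℤ) (c : List (Fin n)) : WithBot ℤ :=
  ((cpairs c).map fun p => w p.1 p.2).sum

/-- An `m`-ascending cycle: a directed cycle of nonnegative total weight. -/
def MAscending {n : ℕ} (w : Fin n → Fin n → WithBot ℤ) (c : List (Fin n)) : Prop :=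
  IsCycle w c ∧ 0 ≤ cycWeight w c

/-- A weighted digraph is `m`-acyclic if it has no `m`-ascending cycle. -/
def MAcyclic {n : ℕ} (w : Fin n → Fin n → WithBot ℤ) : Prop :=
  ∀ c : List (Fin n), ¬ MAscending w c

/-- `w` is a valid weight function of the contiguous integral deformation of
the braid arrangement determined by the bounds `a = α` and `b = β`:
`w i j ∈ {α i j, …, β i j} ∪ {⊥}`, `w i j = ⊥ ↔ w j i = β j i`, and
`w j i = -1 - w i j` whenever both values are finite.  There are no loops. -/
def ValidW {n : ℕ} (a b : Fin n → Fin n → ℤ) (w : Fin n → Fin n → WithBot ℤ) : Prop :=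
  (∀ i, w i i = ⊥) ∧
  ∀ i j : Fin n, i ≠ j →
    (w i j ≠ ⊥ → (a i j : WithBot ℤ) ≤ w i j ∧ w i j ≤ (b i j : WithBot ℤ)) ∧
    (w i j = ⊥ ↔ w j i = (b j i : WithBot ℤ)) ∧
    (∀ x y : ℤ, w i j = (x : WithBot ℤ) → w j i = (y : WithBot ℤ) → y = -1 - x)

/-!
If `u` and `v` are non-consecutive vertices of a cycle joined by edges in both directions, the
chords `u → v` and `v → u` cut the cycle into two strictly shorter cycles, one through each arc.
Their weights add up to the weight of the original cycle plus `w u v + w v u = -1`; since the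
weights are integers, one of the two shorter cycles is again `m`-ascending, contradicting minimality.
-/

section
variable {n : ℕ}

lemma cpairs_rotate (c : List (Fin n)) (k : ℕ) :
    cpairs (c.rotate k) = (cpairs c).rotate k := by
  simp only [cpairs, List.zip_eq_zipWith]
  rw [List.zipWith_rotate_distrib _ _ _ _ (List.length_rotate c 1).symm, List.rotate_rotate,
    List.rotate_rotate, Nat.add_comm]

lemma mem_cpairs_rotate {c : List (Fin n)} {k : ℕ} {p : Fin n × Fin n} :
    p ∈ cpairs (c.rotate k) ↔ p ∈ cpairs c := by
  rw [cpairs_rotate, List.mem_rotate]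

lemma cpairs_cons_append_cons (u v : Fin n) (l₁ l₂ : List (Fin n)) :
    cpairs (u :: (l₁ ++ v :: l₂)) = (u :: l₁).zip (l₁ ++ [v]) ++ (v :: l₂).zip (l₂ ++ [u]) := by
  rw [cpairs, List.rotate_cons_succ, List.rotate_zero, ← List.zip_append (by simp)]
  simp

lemma cycWeight_rotate (w : Fin n → Fin n → WithBot ℤ) (c : List (Fin n)) (k : ℕ) :
    cycWeight w (c.rotate k) = cycWeight w c := by
  rw [cycWeight, cpairs_rotate, List.map_rotate, (List.rotate_perm _ k).sum_eq, cycWeight]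

lemma IsCycle.rotate {w : Fin n → Fin n → WithBot ℤ} {c : List (Fin n)} (hc : IsCycle w c)
    (k : ℕ) : IsCycle w (c.rotate k) :=
  ⟨by simpa using hc.1, List.nodup_rotate.mpr hc.2.1,
    fun p hp => hc.2.2 p (mem_cpairs_rotate.mp hp)⟩

lemma MAscending.rotate {w : Fin n → Fin n → WithBot ℤ} {c : List (Fin n)}
    (hc : MAscending w c) (k : ℕ) : MAscending w (c.rotate k) :=
  ⟨hc.1.rotate k, (cycWeight_rotate w c k).symm ▸ hc.2⟩

lemma List.exists_rotate_eq_cons_append_cons {α : Type*} {c : List α} {u v : α} (hu : u ∈ c)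
    (hv : v ∈ c) (huv : u ≠ v) : ∃ k l₁ l₂, c.rotate k = u :: (l₁ ++ v :: l₂) := by
  obtain ⟨p, q, rfl⟩ := List.append_of_mem hu
  have hrot : (p ++ u :: q).rotate p.length = u :: (q ++ p) := List.rotate_append_length_eq _ _
  have hv' : v ∈ q ++ p := by simpa [huv.symm, or_comm] using hv
  obtain ⟨l₁, l₂, hl⟩ := List.append_of_mem hv'
  exact ⟨p.length, l₁, l₂, hl ▸ hrot⟩

lemma cycWeight_add_cycWeight_chord (w : Fin n → Fin n → WithBot ℤ) (u v : Fin n)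
    (l₁ l₂ : List (Fin n)) :
    cycWeight w (u :: (l₁ ++ [v])) + cycWeight w (v :: (l₂ ++ [u])) =
      cycWeight w (u :: (l₁ ++ v :: l₂)) + (w u v + w v u) := by
  have h₁ := cpairs_cons_append_cons u v l₁ []
  have h₂ := cpairs_cons_append_cons v u l₂ []
  simp only [cycWeight, h₁, h₂, cpairs_cons_append_cons, List.map_append, List.sum_append,
    List.nil_append, List.zip_cons_cons, List.zip_nil_left, List.map_cons, List.map_nil,
    List.sum_cons, List.sum_nil, add_zero]
  ac_rfl

lemma IsCycle.cons_append_singleton {w : Fin n → Fin n → WithBot ℤ} {u v : Fin n}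
    {l₁ l₂ : List (Fin n)} (hc : IsCycle w (u :: (l₁ ++ v :: l₂))) (hvu : w v u ≠ ⊥) :
    IsCycle w (u :: (l₁ ++ [v])) := by
  refine ⟨by simp, hc.2.1.sublist (by simp), fun p hp => ?_⟩
  have h := cpairs_cons_append_cons u v l₁ []
  simp only [List.nil_append, List.zip_cons_cons, List.zip_nil_left] at h
  rw [h, List.mem_append, List.mem_singleton] at hp
  rcases hp with hp | rfl
  · exact hc.2.2 p (by rw [cpairs_cons_append_cons]; exact List.mem_append_left _ hp)
  · exact hvu

lemma WithBot.nonneg_or_nonneg_of_add_eq_add {x y z t : WithBot ℤ} (h : x + y = z + t)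
    (hz : 0 ≤ z) (ht : ((-1 : ℤ) : WithBot ℤ) ≤ t) : 0 ≤ x ∨ 0 ≤ y := by
  lift z to ℤ using ne_bot_of_le_ne_bot (by simp) hz
  lift t to ℤ using ne_bot_of_le_ne_bot (by simp) ht
  have hxy : x + y ≠ ⊥ := h ▸ by simp
  lift x to ℤ using WithBot.add_ne_bot.mp hxy |>.1
  lift y to ℤ using WithBot.add_ne_bot.mp hxy |>.2
  norm_cast at *
  omega

lemma MAscending.exists_shorter_of_chord {w : Fin n → Fin n → WithBot ℤ} {u v : Fin n}
    {l₁ l₂ : List (Fin n)} (hc : MAscending w (u :: (l₁ ++ v :: l₂))) (hl₁ : l₁ ≠ [])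
    (hl₂ : l₂ ≠ []) (hchord : ((-1 : ℤ) : WithBot ℤ) ≤ w u v + w v u) :
    ∃ c', MAscending w c' ∧ c'.length < (u :: (l₁ ++ v :: l₂)).length := by
  have hchord' : w u v + w v u ≠ ⊥ := ne_bot_of_le_ne_bot (by simp) hchord
  have hvu : w v u ≠ ⊥ := (WithBot.add_ne_bot.mp hchord').2
  have huv : w u v ≠ ⊥ := (WithBot.add_ne_bot.mp hchord').1
  have hc' : IsCycle w (v :: (l₂ ++ u :: l₁)) := by
    simpa using hc.1.rotate (l₁.length + 1)
  have hl₁' := List.length_pos_iff.mpr hl₁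
  have hl₂' := List.length_pos_iff.mpr hl₂
  rcases WithBot.nonneg_or_nonneg_of_add_eq_add (cycWeight_add_cycWeight_chord w u v l₁ l₂)
    hc.2 hchord with h | h
  · exact ⟨_, ⟨hc.1.cons_append_singleton hvu, h⟩, by simp; omega⟩
  · exact ⟨_, ⟨hc'.cons_append_singleton huv, h⟩, by simp; omega⟩

lemma ValidW.add_eq_neg_one {a b : Fin n → Fin n → ℤ} {w : Fin n → Fin n → WithBot ℤ}
    (hw : ValidW a b w) {i j : Fin n} (hij : i ≠ j) (hi : w i j ≠ ⊥) (hj : w j i ≠ ⊥) :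
    w i j + w j i = ((-1 : ℤ) : WithBot ℤ) := by
  lift w i j to ℤ using hi with x hx
  lift w j i to ℤ using hj with y hy
  have := (hw.2 i j hij).2.2 x y hx.symm hy.symm
  norm_cast
  omega

end

theorem stmt6_general (n : ℕ) (a b : Fin n → Fin n → ℤ)
    (w : Fin n → Fin n → WithBot ℤ) (hw : ValidW a b w)
    (c : List (Fin n)) (hc : MAscending w c)
    (hmin : ∀ c' : List (Fin n), MAscending w c' → c.length ≤ c'.length)
    (u v : Fin n) (hu : u ∈ c) (hv : v ∈ c) (huv : u ≠ v)
    (hncons : (u, v) ∉ cpairs c ∧ (v, u) ∉ cpairs c) :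
    w u v = ⊥ ∨ w v u = ⊥ := by
  by_contra! hfin
  obtain ⟨k, l₁, l₂, hk⟩ := List.exists_rotate_eq_cons_append_cons hu hv huv
  have hl₁ : l₁ ≠ [] := by
    rintro rfl
    exact hncons.1 (mem_cpairs_rotate.mp (by rw [hk, cpairs_cons_append_cons]; simp))
  have hl₂ : l₂ ≠ [] := by
    rintro rfl
    exact hncons.2 (mem_cpairs_rotate.mp (by rw [hk, cpairs_cons_append_cons]; simp))
  obtain ⟨c', hc', hlt⟩ := (hk ▸ hc.rotate k).exists_shorter_of_chord hl₁ hl₂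
    (hw.add_eq_neg_one huv hfin.1 hfin.2).ge
  have := hmin c' hc'
  rw [← hk, List.length_rotate] at hlt
  omega

theorem stmt6 (n : ℕ) (a b : Fin n → Fin n → ℤ)
    (hab : ∀ i j : Fin n, i < j → a i j ≤ b i j)
    (hsym : ∀ i j : Fin n, i < j → a j i = -(b i j) ∧ b j i = -(a i j))
    (w : Fin n → Fin n → WithBot ℤ) (hw : ValidW a b w)
    (c : List (Fin n)) (hc : MAscending w c)
    (hmin : ∀ c' : List (Fin n), MAscending w c' → c.length ≤ c'.length)
    (u v : Fin n) (hu : u ∈ c) (hv : v ∈ c) (huv : u ≠ v)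
    (hncons : (u, v) ∉ cpairs c ∧ (v, u) ∉ cpairs c) :
    w u v = ⊥ ∨ w v u = ⊥ :=
  stmt6_general n a b w hw c hc hmin u v hu hv huv hncons
end

section
/- Let a contiguous integral deformation of the braid arrangement on {1,…,n} satisfy β(i,k) ≤ β(i,j) + β(j,k) + 1 for all triples of pairwise distinct i, j, k ∈ {1,…,n}. Then a valid weight function w is m-acyclic (has no m-ascending directed cycle) if and only if it contains no m-ascending directed cycle of length at most four. -/
/-!
Take a shortest ascending cycle `v 0 → v 1 → ⋯ → v (m-1) → v 0`, of weight `S ≥ 0`, and suppose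
`m ≥ 5`. A chord `v (i+k) → v i` closes the arc `v i → ⋯ → v (i+k)` into a shorter cycle, which
must be descending. Hence of the two chords between `v i` and `v (i+k)` exactly one is present, its
weight is the upper bound `β`, and `β (v i) (v (i+k))` lies below `W - S` if the forward chord is
present and above `W` if it is absent, `W` being the weight of the arc. Through the triangle
inequality for `β` this makes all chords `v i → v (i+2)` present or all absent, and then likewise
all chords `v i → v (i+k)`, `2 ≤ k ≤ m - 2`. But `v 0 → v (m-2)` and `v (m-2) → v m = v 0` are
two such chords in opposite directions between the same two vertices.
-/

open Finset

variable {n : ℕ}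

lemma Function.Periodic.forall_of_forall_succ_imp {Q : ℕ → Prop} {m : ℕ}
    (hQ : Function.Periodic Q m) (hm : 0 < m) (hstep : ∀ i, Q (i + 1) → Q i) {i₀ : ℕ}
    (h₀ : Q i₀) (i : ℕ) : Q i := by
  have hdown : ∀ t j, Q (j + t) → Q j := by
    intro t
    induction t with
    | zero => exact fun j hj => hj
    | succ t ih => exact fun j hj => hstep j (ih (j + 1) (by rwa [add_right_comm]))
  apply hdown (i₀ + i * m - i)
  have hper : Q (i₀ + i * m) = Q i₀ := by simpa using (hQ.nat_mul i) i₀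
  rwa [Nat.add_sub_cancel' (by nlinarith), hper]

lemma forall_of_two_three_of_add_two {P : ℕ → Prop} {M : ℕ} (h₂ : P 2) (h₃ : P 3)
    (hstep : ∀ k, 2 ≤ k → k + 2 ≤ M → P k → P (k + 2)) : ∀ k, 2 ≤ k → k ≤ M → P k := by
  intro k
  induction k using Nat.strong_induction_on with
  | _ k ih =>
    intro hk hkM
    rcases (by omega : k = 2 ∨ k = 3 ∨ 4 ≤ k) with rfl | rfl | hk4
    · exact h₂
    · exact h₃
    · obtain ⟨j, rfl⟩ : ∃ j, k = j + 2 := ⟨k - 2, by omega⟩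
      exact hstep j (by omega) hkM (ih j (by omega) (by omega) (by omega))

section Validity

variable {a b : Fin n → Fin n → ℤ} {w : Fin n → Fin n → WithBot ℤ} {x y : Fin n} {t s : ℤ}

lemma eq_neg_swap_of_sym (hsym : ∀ i j : Fin n, i < j → a j i = -(b i j) ∧ b j i = -(a i j))
    (hxy : x ≠ y) : a x y = -b y x := by
  rcases hxy.lt_or_gt with h | h
  · have := (hsym x y h).2
    omega
  · exact (hsym y x h).1

namespace ValidW

lemma le_of_eq (hw : ValidW a b w) (hxy : x ≠ y) (h : w x y = t) : t ≤ b x y := by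
  have := ((hw.2 x y hxy).1 (by simp [h])).2
  rwa [h, WithBot.coe_le_coe] at this

lemma neg_le_of_eq (hw : ValidW a b w) (ha : a x y = -b y x) (hxy : x ≠ y) (h : w x y = t) :
    -b y x ≤ t := by
  have := ((hw.2 x y hxy).1 (by simp [h])).1
  rwa [h, WithBot.coe_le_coe, ha] at this

lemma swap_eq_of_eq_bot (hw : ValidW a b w) (hxy : x ≠ y) (h : w x y = ⊥) : w y x = b y x :=
  (hw.2 x y hxy).2.1.mp h

lemma add_swap_eq (hw : ValidW a b w) (hxy : x ≠ y) (ht : w x y = t) (hs : w y x = s) :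
    t + s = -1 := by
  have := (hw.2 x y hxy).2.2 t s ht hs
  omega

end ValidW

end Validity

section Cycles

variable {w : Fin n → Fin n → WithBot ℤ}

lemma cpairs_map_range (u : ℕ → Fin n) (L : ℕ) :
    cpairs ((List.range L).map u) = (List.range L).map fun j => (u j, u ((j + 1) % L)) := by
  apply List.ext_getElem <;> simp [cpairs]

lemma cycWeight_map_range (u : ℕ → Fin n) (L : ℕ) :
    cycWeight w ((List.range L).map u) = ∑ j ∈ range L, w (u j) (u ((j + 1) % L)) := by
  rw [cycWeight, cpairs_map_range, List.map_map, sum_eq_multiset_sum]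
  rfl

lemma isCycle_map_range_iff (u : ℕ → Fin n) (L : ℕ) :
    IsCycle w ((List.range L).map u) ↔
      2 ≤ L ∧ Set.InjOn u (Set.Iio L) ∧ ∀ j < L, w (u j) (u ((j + 1) % L)) ≠ ⊥ := by
  simp [IsCycle, cpairs_map_range, List.nodup_map_iff_inj_on List.nodup_range, Set.InjOn]

-- A missing edge counts as `0`, which never matters along a cycle.
def arcWeight (w : Fin n → Fin n → WithBot ℤ) (v : ℕ → Fin n) (i k : ℕ) : ℤ :=
  ∑ j ∈ range k, (w (v (i + j)) (v (i + j + 1))).unbotD 0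

lemma arcWeight_add (v : ℕ → Fin n) (i k l : ℕ) :
    arcWeight w v i (k + l) = arcWeight w v i k + arcWeight w v (i + k) l := by
  simp only [arcWeight, sum_range_add, add_assoc]

lemma arcWeight_eq_of_periodic {v : ℕ → Fin n} {m : ℕ} (hv : Function.Periodic v m) (i : ℕ) :
    arcWeight w v i m = arcWeight w v 0 m := by
  induction i with
  | zero => rfl
  | succ i ih =>
    have hshift : arcWeight w v (i + m) 1 = arcWeight w v i 1 := by
      simp [arcWeight, add_right_comm i m 1, hv _]
    have h₁ := arcWeight_add (w := w) v i 1 m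
    have h₂ := arcWeight_add (w := w) v i m 1
    rw [add_comm 1 m] at h₁
    linarith

structure IsShortestAscendingCycle (w : Fin n → Fin n → WithBot ℤ) (m : ℕ) (v : ℕ → Fin n) :
    Prop where
  periodic : Function.Periodic v m
  ascending : MAscending w ((List.range m).map v)
  minimal : ∀ c : List (Fin n), c.length < m → ¬ MAscending w c

lemma exists_isShortestAscendingCycle {c : List (Fin n)} (hc : MAscending w c) :
    ∃ m v, IsShortestAscendingCycle w m v := by
  obtain ⟨c, hc, hmin⟩ := (measure List.length).wf.has_min {c | MAscending w c} ⟨c, hc⟩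
  have hpos : 0 < c.length := by have := hc.1.1; omega
  refine ⟨c.length, fun i => c.get ⟨i % c.length, Nat.mod_lt _ hpos⟩, fun i => by simp, ?_,
    fun c' hc' hasc => hmin c' hasc hc'⟩
  have hc_eq :
      (List.range c.length).map (fun i => c.get ⟨i % c.length, Nat.mod_lt _ hpos⟩) = c := by
    apply List.ext_getElem
    · simp
    · intro i hi _
      simp [Nat.mod_eq_of_lt (by simpa using hi)]
  rwa [hc_eq]

end Cycles

namespace IsShortestAscendingCycle

variable {a b : Fin n → Fin n → ℤ} {w : Fin n → Fin n → WithBot ℤ} {m : ℕ} {v : ℕ → Fin n}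
  {i k : ℕ} {t : ℤ}

lemma two_le (h : IsShortestAscendingCycle w m v) : 2 ≤ m :=
  ((isCycle_map_range_iff v m).mp h.ascending.1).1

lemma injOn_shift (h : IsShortestAscendingCycle w m v) (i : ℕ) :
    Set.InjOn (fun j => v (i + j)) (Set.Iio m) := by
  intro p hp q hq hpq
  have hinj := ((isCycle_map_range_iff v m).mp h.ascending.1).2.1
  have hmod : (i + p) % m = (i + q) % m := by
    have hm : 0 < m := by have := h.two_le; omega
    refine hinj (Nat.mod_lt _ hm) (Nat.mod_lt _ hm) ?_
    simpa only [h.periodic.map_mod_nat] using hpq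
  have := Nat.ModEq.add_left_cancel' i hmod
  rwa [Nat.ModEq, Nat.mod_eq_of_lt hp, Nat.mod_eq_of_lt hq] at this

lemma apply_ne_of_lt (h : IsShortestAscendingCycle w m v) {j : ℕ} (hij : i < j) (hji : j < i + m) :
    v i ≠ v j := by
  intro he
  have := h.injOn_shift i (Set.mem_Iio.mpr (show 0 < m by omega))
    (Set.mem_Iio.mpr (show j - i < m by omega)) (by simpa [Nat.add_sub_cancel' hij.le] using he)
  omega

lemma edge_ne_bot (h : IsShortestAscendingCycle w m v) (i : ℕ) : w (v i) (v (i + 1)) ≠ ⊥ := by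
  have hm : 0 < m := by have := h.two_le; omega
  have := ((isCycle_map_range_iff v m).mp h.ascending.1).2.2 (i % m) (Nat.mod_lt _ hm)
  rwa [Nat.mod_add_mod, h.periodic.map_mod_nat, h.periodic.map_mod_nat] at this

lemma coe_arcWeight (h : IsShortestAscendingCycle w m v) (i k : ℕ) :
    (arcWeight w v i k : WithBot ℤ) = ∑ j ∈ range k, w (v (i + j)) (v (i + j + 1)) := by
  rw [arcWeight, WithBot.coe_sum]
  refine sum_congr rfl fun j _ => ?_
  obtain ⟨t, ht⟩ := WithBot.ne_bot_iff_exists.mp (h.edge_ne_bot (i + j))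
  rw [← ht]
  rfl

lemma arcWeight_nonneg (h : IsShortestAscendingCycle w m v) : 0 ≤ arcWeight w v 0 m := by
  have hasc := h.ascending.2
  rw [cycWeight_map_range] at hasc
  simp only [h.periodic.map_mod_nat] at hasc
  rw [← WithBot.coe_le_coe, h.coe_arcWeight]
  simpa using hasc

lemma arcWeight_add_lt_zero (h : IsShortestAscendingCycle w m v) (hk : 0 < k) (hkm : k + 2 ≤ m)
    (ht : w (v (i + k)) (v i) = t) : arcWeight w v i k + t < 0 := by
  by_contra! hnonneg
  refine h.minimal ((List.range (k + 1)).map fun j => v (i + j)) (by simp; omega) ⟨?_, ?_⟩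
  · refine (isCycle_map_range_iff _ _).mpr ⟨by omega, (h.injOn_shift i).mono ?_, fun j hj => ?_⟩
    · intro j hj
      simp only [Set.mem_Iio] at hj ⊢
      omega
    rcases (by omega : j < k ∨ j = k) with hj | rfl
    · rw [Nat.mod_eq_of_lt (by omega)]
      exact h.edge_ne_bot (i + j)
    · simp [ht]
  · rw [cycWeight_map_range, sum_range_succ, Nat.mod_self, add_zero,
      sum_congr rfl fun j hj => by rw [Nat.mod_eq_of_lt (by simp at hj; omega)], ht]
    change (0 : WithBot ℤ) ≤ ∑ j ∈ range k, w (v (i + j)) (v (i + j + 1)) + t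
    rw [← h.coe_arcWeight, ← WithBot.coe_add, WithBot.coe_nonneg]
    exact hnonneg

lemma arcWeight_compl_add_lt_zero (h : IsShortestAscendingCycle w m v) (hk : 2 ≤ k) (hkm : k < m)
    (ht : w (v i) (v (i + k)) = t) : arcWeight w v 0 m - arcWeight w v i k + t < 0 := by
  have harc := h.arcWeight_add_lt_zero (i := i + k) (k := m - k) (by omega) (by omega)
    (by rwa [show i + k + (m - k) = i + m by omega, h.periodic])
  have hsplit := arcWeight_add (w := w) v i k (m - k)
  rw [Nat.add_sub_cancel' hkm.le, arcWeight_eq_of_periodic h.periodic] at hsplit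
  linarith

lemma ne_bot_iff_swap_eq_bot (h : IsShortestAscendingCycle w m v) (hw : ValidW a b w)
    (hk : 2 ≤ k) (hkm : k + 2 ≤ m) : w (v i) (v (i + k)) ≠ ⊥ ↔ w (v (i + k)) (v i) = ⊥ := by
  have hne : v i ≠ v (i + k) := h.apply_ne_of_lt (by omega) (by omega)
  refine ⟨fun hc => ?_, fun hc => by simp [hw.swap_eq_of_eq_bot hne.symm hc]⟩
  obtain ⟨t, ht⟩ := WithBot.ne_bot_iff_exists.mp hc
  by_contra hr
  obtain ⟨s, hs⟩ := WithBot.ne_bot_iff_exists.mp hr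
  have h₁ := h.arcWeight_add_lt_zero (by omega) hkm hs.symm
  have h₂ := h.arcWeight_compl_add_lt_zero hk (by omega) ht.symm
  have h₃ := hw.add_swap_eq hne ht.symm hs.symm
  linarith [h.arcWeight_nonneg]

section Chords

variable (h : IsShortestAscendingCycle w m v) (hw : ValidW a b w)
  (ha : ∀ x y : Fin n, x ≠ y → a x y = -b y x)

include h hw ha

lemma chord_bounds_of_ne_bot (hk : 2 ≤ k) (hkm : k + 2 ≤ m) (hc : w (v i) (v (i + k)) ≠ ⊥) :
    b (v i) (v (i + k)) + arcWeight w v 0 m < arcWeight w v i k ∧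
      arcWeight w v 0 m < b (v (i + k)) (v i) + arcWeight w v i k := by
  have hne : v i ≠ v (i + k) := h.apply_ne_of_lt (by omega) (by omega)
  have hval := hw.swap_eq_of_eq_bot hne.symm ((h.ne_bot_iff_swap_eq_bot hw hk hkm).mp hc)
  have h₁ := h.arcWeight_compl_add_lt_zero hk (by omega) hval
  have h₂ := hw.neg_le_of_eq (ha _ _ hne) hne hval
  constructor <;> linarith

lemma chord_bounds_of_eq_bot (hk : 2 ≤ k) (hkm : k + 2 ≤ m) (hc : w (v i) (v (i + k)) = ⊥) :
    b (v (i + k)) (v i) + arcWeight w v i k < 0 ∧ arcWeight w v i k < b (v i) (v (i + k)) := by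
  have hne : v i ≠ v (i + k) := h.apply_ne_of_lt (by omega) (by omega)
  have hval := hw.swap_eq_of_eq_bot hne hc
  have h₁ := h.arcWeight_add_lt_zero (by omega) hkm hval
  have h₂ := hw.neg_le_of_eq (ha _ _ hne.symm) hne.symm hval
  constructor <;> linarith

lemma edge_bounds (i : ℕ) :
    arcWeight w v i 1 ≤ b (v i) (v (i + 1)) ∧ -b (v (i + 1)) (v i) ≤ arcWeight w v i 1 := by
  have hne : v i ≠ v (i + 1) := h.apply_ne_of_lt (by omega) (by have := h.two_le; omega)
  have hval : w (v i) (v (i + 1)) = arcWeight w v i 1 := by simp [h.coe_arcWeight]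
  exact ⟨hw.le_of_eq hne hval, hw.neg_le_of_eq (ha _ _ hne) hne hval⟩

variable (htri : ∀ x y z : Fin n, x ≠ y → y ≠ z → x ≠ z → b x z ≤ b x y + b y z + 1)

include htri

lemma eq_bot_three_of_eq_bot_two (hm : 5 ≤ m) (hc : w (v i) (v (i + 2)) = ⊥) :
    w (v i) (v (i + 3)) = ⊥ := by
  by_contra h₃
  have hb₂ := (h.chord_bounds_of_eq_bot hw ha le_rfl (by omega) hc).1
  have hb₃ := (h.chord_bounds_of_ne_bot hw ha (k := 3) (by omega) (by omega) h₃).1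
  have he := (h.edge_bounds hw ha (i + 2)).1
  have htr := htri (v (i + 2)) (v i) (v (i + 3)) (h.apply_ne_of_lt (by omega) (by omega)).symm
    (h.apply_ne_of_lt (by omega) (by omega)) (h.apply_ne_of_lt (by omega) (by omega))
  have hW : arcWeight w v i 3 = arcWeight w v i 2 + arcWeight w v (i + 2) 1 := arcWeight_add v i 2 1
  linarith [h.arcWeight_nonneg]

lemma ne_bot_three_of_ne_bot_two_succ (hm : 5 ≤ m) (hc : w (v (i + 1)) (v (i + 1 + 2)) ≠ ⊥) :
    w (v i) (v (i + 3)) ≠ ⊥ := by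
  intro h₃
  have hb₂ := (h.chord_bounds_of_ne_bot hw ha le_rfl (by omega) hc).1
  have hb₃ := (h.chord_bounds_of_eq_bot hw ha (k := 3) (by omega) (by omega) h₃).1
  have he := (h.edge_bounds hw ha i).2
  have htr := htri (v (i + 1)) (v (i + 1 + 2)) (v i) (h.apply_ne_of_lt (by omega) (by omega))
    (h.apply_ne_of_lt (by omega) (by omega)).symm (h.apply_ne_of_lt (by omega) (by omega)).symm
  have hW : arcWeight w v i 3 = arcWeight w v i 1 + arcWeight w v (i + 1) 2 := arcWeight_add v i 1 2
  rw [show i + 1 + 2 = i + 3 by ring] at hb₂ htr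
  linarith [h.arcWeight_nonneg]

lemma ne_bot_add_two (hk : 2 ≤ k) (hkm : k + 4 ≤ m) (h₁ : w (v i) (v (i + k)) ≠ ⊥)
    (h₂ : w (v (i + k)) (v (i + k + 2)) ≠ ⊥) : w (v i) (v (i + (k + 2))) ≠ ⊥ := by
  intro h₃
  have hb₁ := (h.chord_bounds_of_ne_bot hw ha hk (by omega) h₁).1
  have hb₂ := (h.chord_bounds_of_ne_bot hw ha le_rfl (by omega) h₂).1
  have hb₃ := (h.chord_bounds_of_eq_bot hw ha (by omega) (by omega) h₃).2
  have htr := htri (v i) (v (i + k)) (v (i + k + 2)) (h.apply_ne_of_lt (by omega) (by omega))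
    (h.apply_ne_of_lt (by omega) (by omega)) (h.apply_ne_of_lt (by omega) (by omega))
  rw [← add_assoc] at hb₃
  linarith [h.arcWeight_nonneg, arcWeight_add (w := w) v i k 2]

lemma eq_bot_add_two (hk : 2 ≤ k) (hkm : k + 4 ≤ m) (h₁ : w (v i) (v (i + k)) = ⊥)
    (h₂ : w (v (i + k)) (v (i + k + 2)) = ⊥) : w (v i) (v (i + (k + 2))) = ⊥ := by
  by_contra h₃
  have hb₁ := (h.chord_bounds_of_eq_bot hw ha hk (by omega) h₁).1
  have hb₂ := (h.chord_bounds_of_eq_bot hw ha le_rfl (by omega) h₂).1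
  have hb₃ := (h.chord_bounds_of_ne_bot hw ha (by omega) (by omega) h₃).2
  have htr := htri (v (i + k + 2)) (v (i + k)) (v i) (h.apply_ne_of_lt (by omega) (by omega)).symm
    (h.apply_ne_of_lt (by omega) (by omega)).symm (h.apply_ne_of_lt (by omega) (by omega)).symm
  rw [← add_assoc] at hb₃
  linarith [h.arcWeight_nonneg, arcWeight_add (w := w) v i k 2]

lemma two_chords_all_or_none (hm : 5 ≤ m) :
    (∀ i, w (v i) (v (i + 2)) ≠ ⊥) ∨ ∀ i, w (v i) (v (i + 2)) = ⊥ := by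
  by_cases hex : ∃ i₀, w (v i₀) (v (i₀ + 2)) ≠ ⊥
  · obtain ⟨i₀, h₀⟩ := hex
    refine Or.inl <| Function.Periodic.forall_of_forall_succ_imp
      (Q := fun j => w (v j) (v (j + 2)) ≠ ⊥) (m := m) (fun j => ?_) (by omega)
      (fun j hj h₂ => ?_) h₀
    · simp only [add_right_comm j m 2, h.periodic _]
    · exact h.ne_bot_three_of_ne_bot_two_succ hw ha htri hm hj
        (h.eq_bot_three_of_eq_bot_two hw ha htri hm h₂)
  · exact Or.inr (by simpa using hex)

theorem length_le_four : m ≤ 4 := by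
  by_contra! hm
  have hclose := h.ne_bot_iff_swap_eq_bot hw (i := 0) (k := m - 2) (by omega) (by omega)
  have hwrap : v (m - 2 + 2) = v 0 := by rw [Nat.sub_add_cancel (by omega), h.periodic.eq]
  rw [zero_add] at hclose
  rcases h.two_chords_all_or_none hw ha htri hm with hP | hP
  · have hfar := forall_of_two_three_of_add_two (P := fun k => ∀ i, w (v i) (v (i + k)) ≠ ⊥)
      hP (fun i => h.ne_bot_three_of_ne_bot_two_succ hw ha htri hm (hP (i + 1)))
      (fun k hk hkm hPk i => h.ne_bot_add_two hw ha htri hk (by omega) (hPk i) (hP (i + k)))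
      (m - 2) (by omega) le_rfl 0
    have hback := hP (m - 2)
    rw [hwrap] at hback
    exact hback (hclose.mp (by simpa using hfar))
  · have hfar := forall_of_two_three_of_add_two (P := fun k => ∀ i, w (v i) (v (i + k)) = ⊥)
      hP (fun i => h.eq_bot_three_of_eq_bot_two hw ha htri hm (hP i))
      (fun k hk hkm hPk i => h.eq_bot_add_two hw ha htri hk (by omega) (hPk i) (hP (i + k)))
      (m - 2) (by omega) le_rfl 0
    have hback := hP (m - 2)
    rw [hwrap] at hback
    exact hclose.mpr hback (by simpa using hfar)

end Chords

end IsShortestAscendingCycle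

theorem stmt7_general (n : ℕ) (a b : Fin n → Fin n → ℤ)
    (hsym : ∀ i j : Fin n, i < j → a j i = -(b i j) ∧ b j i = -(a i j))
    (htri : ∀ i j k : Fin n, i ≠ j → j ≠ k → i ≠ k → b i k ≤ b i j + b j k + 1)
    (w : Fin n → Fin n → WithBot ℤ) (hw : ValidW a b w) :
    MAcyclic w ↔ ∀ c : List (Fin n), c.length ≤ 4 → ¬ MAscending w c := by
  refine ⟨fun h c _ => h c, fun hshort c hc => ?_⟩
  obtain ⟨m, v, hv⟩ := exists_isShortestAscendingCycle hc
  have hm := hv.length_le_four hw (fun _ _ => eq_neg_swap_of_sym hsym) htri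
  exact hshort _ (by simpa using hm) hv.ascending

theorem stmt7 (n : ℕ) (a b : Fin n → Fin n → ℤ)
    (hab : ∀ i j : Fin n, i < j → a i j ≤ b i j)
    (hsym : ∀ i j : Fin n, i < j → a j i = -(b i j) ∧ b j i = -(a i j))
    (htri : ∀ i j k : Fin n, i ≠ j → j ≠ k → i ≠ k → b i k ≤ b i j + b j k + 1)
    (w : Fin n → Fin n → WithBot ℤ) (hw : ValidW a b w) :
    MAcyclic w ↔ ∀ c : List (Fin n), c.length ≤ 4 → ¬ MAscending w c :=
  stmt7_general n a b hsym htri w hw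
end

section
/- A separated contiguous integral deformation of the braid arrangement on {1,…,n} satisfies the weak triangle inequality if and only if β(i,j) ≤ β(i,k) + 1 and β(i,j) ≤ β(k,j) + 1 hold for all triples of pairwise distinct i, j, k ∈ {1,…,n}. -/
/-- The deformation with bounds `a = α`, `b = β` satisfies the weak triangle
inequality: for every valid `m`-acyclic weight function `w` and pairwise
distinct `i, j, k`, if `w i j ≥ 0` and `w j k ≥ 0` then
`w i k ≤ w i j + w j k + 1`. -/
def WeakTriangle {n : ℕ} (a b : Fin n → Fin n → ℤ) : Prop :=
  ∀ w : Fin n → Fin n → WithBot ℤ, ValidW a b w → MAcyclic w →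
    ∀ i j k : Fin n, i ≠ j → j ≠ k → i ≠ k →
      0 ≤ w i j → 0 ≤ w j k → w i k ≤ w i j + w j k + 1

/-!
Suppose `w(i,j) ≥ 0` and `w(j,k) ≥ 0`. If `w(j,i) = -∞`, validity forces `w(i,j) = β(i,j)`, and
`w(i,k) ≤ β(i,k) ≤ β(i,j) + 1` gives the weak triangle inequality; likewise if `w(k,j) = -∞`.
Otherwise `i → k → j → i` is a cycle of weight `w(i,k) - w(i,j) - w(j,k) - 2`, which
`m`-acyclicity makes negative.

Conversely, rank the vertices `i < k < j < …` and give every upward edge its maximal weight `β`,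
except for weight `0` on `k → j`. This is a valid weight function, and it is `m`-acyclic because
every edge weight is less than the increase of a potential that grows steeply along the ranking.
On the triangle `i, k, j` the weak triangle inequality reads `β(i,j) ≤ β(i,k) + 1`. Putting the
weight `0` on `i → k` instead yields `β(i,j) ≤ β(k,j) + 1`.
-/

open Function

section Potential

variable {n : ℕ}

theorem sum_map_cpairs_sub {M : Type*} [AddCommGroup M] (f : Fin n → M) (c : List (Fin n)) :
    ((cpairs c).map fun p => f p.2 - f p.1).sum = 0 := by
  have hfst : (cpairs c).map Prod.fst = c := List.map_fst_zip (by simp)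
  have hsnd : (cpairs c).map Prod.snd = c.rotate 1 := List.map_snd_zip (by simp)
  have := Multiset.sum_map_sub (m := (cpairs c : Multiset (Fin n × Fin n)))
    (f := fun p => f p.2) (g := fun p => f p.1)
  simp only [Multiset.map_coe, Multiset.sum_coe] at this
  have h2 : (cpairs c).map (fun p => f p.2) = (c.rotate 1).map f := by
    conv_rhs => rw [← hsnd, List.map_map]
    rfl
  have h1 : (cpairs c).map (fun p => f p.1) = c.map f := by
    conv_rhs => rw [← hfst, List.map_map]
    rfl
  rw [this, h1, h2, ((c.rotate_perm 1).map f).sum_eq, sub_self]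

theorem macyclic_of_potential {w : Fin n → Fin n → WithBot ℤ} (φ : Fin n → ℚ)
    (hφ : ∀ u v (x : ℤ), w u v = x → (x : ℚ) < φ v - φ u) : MAcyclic w := by
  rintro c ⟨⟨hlen, -, hedge⟩, hnonneg⟩
  let g : Fin n × Fin n → ℤ := fun p => (w p.1 p.2).unbotD 0
  have hg : ∀ p ∈ cpairs c, w p.1 p.2 = g p := fun p hp => by
    obtain ⟨x, hx⟩ := WithBot.ne_bot_iff_exists.mp (hedge p hp)
    simp [g, ← hx]
  have hne : cpairs c ≠ [] := by
    rw [← List.length_pos_iff]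
    simp only [cpairs, List.length_zip, List.length_rotate, min_self]
    omega
  have hsum : cycWeight w c = (((cpairs c).map g).sum : ℤ) := by
    rw [cycWeight, List.map_congr_left hg]
    refine ((map_list_sum (WithBot.addHom : ℤ →+ WithBot ℤ) _).trans ?_).symm
    rw [List.map_map]
    rfl
  have hlt : ((((cpairs c).map g).sum : ℤ) : ℚ) < 0 := by
    rw [Int.cast_list_sum, List.map_map, ← sum_map_cpairs_sub φ c]
    exact List.sum_lt_sum_of_ne_nil hne _ _ fun p hp => hφ _ _ _ (hg p hp)
  rw [hsum, WithBot.coe_nonneg] at hnonneg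
  have : (0 : ℚ) ≤ (((cpairs c).map g).sum : ℚ) := by exact_mod_cast hnonneg
  linarith

theorem MAcyclic.three_cycle_weight_neg {w : Fin n → Fin n → WithBot ℤ} (hw : MAcyclic w)
    {i j k : Fin n} (hij : i ≠ j) (hjk : j ≠ k) (hik : i ≠ k) {x y z : ℤ}
    (hx : w i j = x) (hy : w j k = y) (hz : w k i = z) : x + y + z < 0 := by
  by_contra! h
  refine hw [i, j, k] ⟨⟨by simp, by simp [*], ?_⟩, ?_⟩
  · intro p hp
    have hc : cpairs [i, j, k] = [(i, j), (j, k), (k, i)] := rfl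
    simp only [hc, List.mem_cons, List.not_mem_nil, or_false] at hp
    rcases hp with rfl | rfl | rfl <;> simp [hx, hy, hz]
  · have hc : cpairs [i, j, k] = [(i, j), (j, k), (k, i)] := rfl
    simp only [cycWeight, hc, List.map_cons, List.map_nil, List.sum_cons, List.sum_nil, add_zero,
      hx, hy, hz, ← add_assoc]
    exact_mod_cast h

end Potential

namespace ValidW

variable {n : ℕ} {a b : Fin n → Fin n → ℤ} {w : Fin n → Fin n → WithBot ℤ} {i j : Fin n}

theorem le_upper (hw : ValidW a b w) (hij : i ≠ j) : w i j ≤ b i j := by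
  by_cases h : w i j = ⊥
  · simp [h]
  · exact ((hw.2 i j hij).1 h).2

theorem eq_upper_of_eq_bot (hw : ValidW a b w) (hij : i ≠ j) (h : w j i = ⊥) : w i j = b i j :=
  ((hw.2 j i hij.symm).2.1).mp h

theorem eq_neg_one_sub (hw : ValidW a b w) (hij : i ≠ j) {x y : ℤ} (hx : w i j = x)
    (hy : w j i = y) : y = -1 - x :=
  (hw.2 i j hij).2.2 x y hx hy

end ValidW

theorem WeakTriangle.le_add_add_one {n : ℕ} {a b : Fin n → Fin n → ℤ} (h : WeakTriangle a b)
    {w : Fin n → Fin n → WithBot ℤ} (hw : ValidW a b w) (hm : MAcyclic w) {i j k : Fin n}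
    (hij : i ≠ j) (hjk : j ≠ k) (hik : i ≠ k) {x y z : ℤ} (hx : w i j = x) (hy : w j k = y)
    (hz : w i k = z) (hx0 : 0 ≤ x) (hy0 : 0 ≤ y) : z ≤ x + y + 1 := by
  have := h w hw hm i j k hij hjk hik (by simpa [hx]) (by simpa [hy])
  rw [hx, hy, hz] at this
  exact_mod_cast this

theorem weakTriangle_of_upper_le {n : ℕ} {a b : Fin n → Fin n → ℤ}
    (h : ∀ i j k : Fin n, i ≠ j → j ≠ k → i ≠ k → b i j ≤ b i k + 1 ∧ b i j ≤ b k j + 1) :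
    WeakTriangle a b := by
  intro w hw hm i j k hij hjk hik hx0 hy0
  obtain ⟨x, hx⟩ := WithBot.ne_bot_iff_exists.mp (ne_bot_of_le_ne_bot WithBot.coe_ne_bot hx0)
  obtain ⟨y, hy⟩ := WithBot.ne_bot_iff_exists.mp (ne_bot_of_le_ne_bot WithBot.coe_ne_bot hy0)
  rw [← hx, WithBot.coe_nonneg] at hx0
  rw [← hy, WithBot.coe_nonneg] at hy0
  rw [← hx, ← hy]
  obtain ⟨hle_ij, hle_jk⟩ := h i k j hik hjk.symm hij
  have hbik := hw.le_upper hik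
  rcases eq_or_ne (w j i) ⊥ with hji | hji
  · have : x = b i j := by exact_mod_cast hx.trans (hw.eq_upper_of_eq_bot hij hji)
    exact hbik.trans (by exact_mod_cast (by omega))
  obtain ⟨x', hx'⟩ := WithBot.ne_bot_iff_exists.mp hji
  rcases eq_or_ne (w k j) ⊥ with hkj | hkj
  · have : y = b j k := by exact_mod_cast hy.trans (hw.eq_upper_of_eq_bot hjk hkj)
    exact hbik.trans (by exact_mod_cast (by omega))
  obtain ⟨y', hy'⟩ := WithBot.ne_bot_iff_exists.mp hkj
  rcases eq_or_ne (w i k) ⊥ with hik' | hik'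
  · simp [hik']
  obtain ⟨z, hz⟩ := WithBot.ne_bot_iff_exists.mp hik'
  have hcycle := hm.three_cycle_weight_neg hik hjk.symm hij hz.symm hy'.symm hx'.symm
  have := hw.eq_neg_one_sub hij hx.symm hx'.symm
  have := hw.eq_neg_one_sub hjk hy.symm hy'.symm
  rw [← hz]
  exact_mod_cast (by omega)

section Construction

variable {n : ℕ} {a b : Fin n → Fin n → ℤ} {ρ : Fin n → ℕ} {x : Fin n → Fin n → ℤ}

/-- Orient every pair along the ranking `ρ`: the edge going up carries the weight `x`, the edge
going down the complementary weight `-1 - x`, or `-∞` when `x` is the upper bound `b`. -/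
def orientedWeight (ρ : Fin n → ℕ) (x b : Fin n → Fin n → ℤ) (u v : Fin n) : WithBot ℤ :=
  if ρ u < ρ v then x u v
  else if ρ v < ρ u then (if x v u = b v u then ⊥ else ((-1 - x v u : ℤ) : WithBot ℤ))
  else ⊥

theorem orientedWeight_valid (hρ : Injective ρ) (hneg : ∀ u v, u ≠ v → a v u = -b u v)
    (hx : ∀ u v, ρ u < ρ v → a u v ≤ x u v ∧ x u v ≤ b u v) :
    ValidW a b (orientedWeight ρ x b) := by
  refine ⟨fun u => by simp [orientedWeight], fun u v huv => ?_⟩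
  have hρuv : ρ u ≠ ρ v := hρ.ne huv
  have h₁ := hneg u v huv
  have h₂ := hneg v u huv.symm
  rcases hρuv.lt_or_gt with hlt | hlt
  · have := hx u v hlt
    simp only [orientedWeight, if_pos hlt, if_neg hlt.not_gt]
    split_ifs <;> simp <;> omega
  · have := hx v u hlt
    simp only [orientedWeight, if_pos hlt, if_neg hlt.not_gt]
    split_ifs <;> simp <;> omega

theorem orientedWeight_macyclic (φ : Fin n → ℚ)
    (hup : ∀ u v, ρ u < ρ v → (x u v : ℚ) < φ v - φ u)
    (hdown : ∀ u v, ρ u < ρ v → x u v ≠ b u v → φ v - φ u < x u v + 1) :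
    MAcyclic (orientedWeight ρ x b) := by
  refine macyclic_of_potential φ fun u v y hy => ?_
  unfold orientedWeight at hy
  split_ifs at hy with hlt hgt hb
  · rw [← WithBot.coe_inj.mp hy]
    exact hup u v hlt
  · exact absurd hy WithBot.bot_ne_coe
  · rw [← WithBot.coe_inj.mp hy]
    have := hdown v u hgt hb
    push_cast
    linarith
  · exact absurd hy WithBot.bot_ne_coe

end Construction

theorem exists_validW_macyclic {n : ℕ} {a b : Fin n → Fin n → ℤ} {ρ : Fin n → ℕ}
    (hρ : Injective ρ) {p q : Fin n} (hpq : ρ q = ρ p + 1)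
    (hneg : ∀ u v, u ≠ v → a v u = -b u v) (hb : ∀ u v, u ≠ v → 0 ≤ b u v) :
    ∃ w, ValidW a b w ∧ MAcyclic w ∧ w p q = (0 : ℤ) ∧
      ∀ u v, ρ u < ρ v → ¬(u = p ∧ v = q) → w u v = b u v := by
  let x : Fin n → Fin n → ℤ := fun u v => if u = p ∧ v = q then 0 else b u v
  obtain ⟨C, hC⟩ := Finite.exists_le fun e : Fin n × Fin n => b e.1 e.2
  let M : ℚ := max C 0 + 1
  have hM : 1 ≤ M := by simp [M]
  have hbM : ∀ u v, (b u v : ℚ) ≤ M - 1 := fun u v => by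
    simpa [M] using le_max_of_le_left (by exact_mod_cast hC (u, v))
  -- `φ` rises by at least `M` along every upward edge except `p → q`, where it rises by `1/2`
  let φ : Fin n → ℚ := fun u => M * ρ u - if u = q then M - 1 / 2 else 0
  have hφpq : φ q - φ p = 1 / 2 := by
    have hqp : p ≠ q := fun h => by simp [h] at hpq
    simp only [φ, hpq, if_neg hqp]
    push_cast
    ring
  refine ⟨orientedWeight ρ x b, orientedWeight_valid hρ hneg ?_, orientedWeight_macyclic φ ?_ ?_,
    by simp [orientedWeight, x, hpq], fun u v hlt h => by simp [orientedWeight, x, hlt, h]⟩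
  · intro u v hlt
    have huv : u ≠ v := fun h => hlt.ne (congrArg ρ h)
    have := hneg v u huv.symm
    have := hb u v huv
    have := hb v u huv.symm
    simp only [x]
    split_ifs <;> omega
  · intro u v hlt
    by_cases hpq' : u = p ∧ v = q
    · obtain ⟨rfl, rfl⟩ := hpq'
      simp [x, hφpq]
    simp only [x, if_neg hpq']
    have hlt' : (ρ u : ℚ) + 1 ≤ ρ v := by exact_mod_cast hlt
    have := hbM u v
    by_cases hvq : v = q
    · subst hvq
      have huv : u ≠ v := fun h => hlt.ne (congrArg ρ h)
      have hup : u ≠ p := fun h => hpq' ⟨h, rfl⟩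
      have : ρ u + 2 ≤ ρ v := by have := hρ.ne hup; omega
      have : (ρ u : ℚ) + 2 ≤ ρ v := by exact_mod_cast this
      simp only [φ, if_pos, if_neg huv]
      nlinarith
    by_cases huq : u = q
    · subst huq
      simp only [φ, if_pos, if_neg hvq]
      nlinarith
    simp only [φ, if_neg hvq, if_neg huq]
    nlinarith
  · intro u v _ hx
    by_cases hpq' : u = p ∧ v = q
    · obtain ⟨rfl, rfl⟩ := hpq'
      simp [x, hφpq]
      norm_num
    · simp [x, hpq'] at hx

theorem exists_rank {n : ℕ} {i j k : Fin n} (hij : i ≠ j) (hjk : j ≠ k) (hik : i ≠ k) :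
    ∃ ρ : Fin n → ℕ, Injective ρ ∧ ρ i = 0 ∧ ρ j = 1 ∧ ρ k = 2 := by
  refine ⟨fun u => if u = i then 0 else if u = j then 1 else if u = k then 2 else u + 3,
    fun u v h => ?_, by simp, by simp [hij.symm], by simp [hik.symm, hjk.symm]⟩
  simp only at h
  split_ifs at h <;> omega

theorem stmt9_general (n : ℕ) (a b : Fin n → Fin n → ℤ)
    (hsym : ∀ i j : Fin n, i < j → a j i = -(b i j) ∧ b j i = -(a i j))
    (hsep : ∀ i j : Fin n, i < j → a i j ≤ 0 ∧ 0 ≤ b i j) :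
    WeakTriangle a b ↔
      ∀ i j k : Fin n, i ≠ j → j ≠ k → i ≠ k →
        b i j ≤ b i k + 1 ∧ b i j ≤ b k j + 1 := by
  have hneg : ∀ u v, u ≠ v → a v u = -b u v := by
    intro u v huv
    rcases huv.lt_or_gt with h | h
    · exact (hsym u v h).1
    · linarith [(hsym v u h).2]
  have hb : ∀ u v, u ≠ v → 0 ≤ b u v := by
    intro u v huv
    rcases huv.lt_or_gt with h | h
    · exact (hsep u v h).2
    · linarith [(hsym v u h).2, (hsep v u h).1]
  refine ⟨fun hWT i j k hij hjk hik => ?_, weakTriangle_of_upper_le⟩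
  obtain ⟨ρ, hρ, hi, hk, hj⟩ := exists_rank hik hjk.symm hij
  obtain ⟨w, hw, hwm, hkj, hup⟩ := exists_validW_macyclic hρ (p := k) (q := j) (by omega) hneg hb
  obtain ⟨w', hw', hwm', hik', hup'⟩ :=
    exists_validW_macyclic hρ (p := i) (q := k) (by omega) hneg hb
  constructor
  · have := hWT.le_add_add_one hw hwm hik hjk.symm hij (hup i k (by omega) fun h => hik h.1)
      hkj (hup i j (by omega) fun h => hik h.1) (hb i k hik) le_rfl
    omega
  · have := hWT.le_add_add_one hw' hwm' hik hjk.symm hij hik'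
      (hup' k j (by omega) fun h => hik h.1.symm) (hup' i j (by omega) fun h => hjk h.2)
      le_rfl (hb k j hjk.symm)
    omega

theorem stmt9 (n : ℕ) (a b : Fin n → Fin n → ℤ)
    (hab : ∀ i j : Fin n, i < j → a i j ≤ b i j)
    (hsym : ∀ i j : Fin n, i < j → a j i = -(b i j) ∧ b j i = -(a i j))
    (hsep : ∀ i j : Fin n, i < j → a i j ≤ 0 ∧ 0 ≤ b i j) :
    WeakTriangle a b ↔
      ∀ i j k : Fin n, i ≠ j → j ≠ k → i ≠ k →
        b i j ≤ b i k + 1 ∧ b i j ≤ b k j + 1 :=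
  stmt9_general n a b hsym hsep
end

section
/- Let 𝒜 be a separated contiguous integral deformation of the braid arrangement on {1,…,n} satisfying the weak triangle inequality. Then there exists a valid weight function of 𝒜 containing an m-ascending directed cycle of length four but no m-ascending directed cycle of length less than four, if and only if 𝒜 has a crossing β-pattern, i.e., there exist four pairwise distinct indices i₁, i₂, j₁, j₂ ∈ {1,…,n} with β(i₁,j₁) < β(i₁,j₂) and β(i₂,j₁) > β(i₂,j₂). -/
section Cycles

variable {n : ℕ} {w : Fin n → Fin n → WithBot ℤ} {c : List (Fin n)}

theorem sum_cpairs_sub {G : Type*} [AddCommGroup G] (φ : Fin n → G) (c : List (Fin n)) :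
    ((cpairs c).map fun p => φ p.1 - φ p.2).sum = 0 := by
  have hfst : (cpairs c).map Prod.fst = c := List.map_fst_zip (by simp)
  have hsnd : (cpairs c).map Prod.snd = c.rotate 1 := List.map_snd_zip (by simp)
  have hsub : ((cpairs c).map fun p => φ p.1 - φ p.2).sum =
      (((cpairs c).map Prod.fst).map φ).sum - (((cpairs c).map Prod.snd).map φ).sum := by
    simp only [List.map_map]
    induction cpairs c <;> simp_all [sub_add_sub_comm]
  rw [hsub, hfst, hsnd, List.map_rotate, ((c.map φ).rotate_perm 1).sum_eq, sub_self]

theorem length_dvd_of_forall_mem_cpairs {C : List (Fin n)} (hC : C.Nodup)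
    (h : ∀ p ∈ cpairs c, p ∈ cpairs C) : C.length ∣ c.length := by
  let ψ : Fin n → ZMod C.length := fun u => (C.idxOf u : ZMod C.length)
  have hstep : ∀ p ∈ cpairs c, ψ p.1 - ψ p.2 = -1 := by
    intro p hp
    obtain ⟨t, ht, hpt⟩ := List.mem_iff_getElem.1 (h p hp)
    simp only [← hpt, ψ, cpairs, List.getElem_zip, List.getElem_rotate, hC.idxOf_getElem,
      ZMod.natCast_mod]
    push_cast
    ring
  have hsum := sum_cpairs_sub ψ c
  rw [List.map_congr_left hstep, List.map_const', List.sum_replicate] at hsum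
  have : (c.length : ZMod C.length) = 0 := by simpa [cpairs] using hsum
  exact (ZMod.natCast_eq_zero_iff _ _).1 this

theorem slack_eq_zero_of_le_sub (φ : Fin n → ℤ) {g ε : Fin n × Fin n → ℤ}
    (hg : 0 ≤ ((cpairs c).map g).sum) (hε : ∀ p ∈ cpairs c, 0 ≤ ε p)
    (h : ∀ p ∈ cpairs c, g p + ε p ≤ φ p.1 - φ p.2) : ∀ p ∈ cpairs c, ε p = 0 := by
  have hle : ((cpairs c).map fun p => g p + ε p).sum ≤ 0 :=
    (List.sum_le_sum h).trans (sum_cpairs_sub φ c).le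
  rw [List.sum_map_add] at hle
  have hεnn : ∀ e ∈ (cpairs c).map ε, 0 ≤ e := by
    simp only [List.mem_map]
    rintro _ ⟨p, hp, rfl⟩
    exact hε p hp
  intro p hp
  have := List.single_le_sum hεnn (ε p) (List.mem_map_of_mem hp)
  linarith [hε p hp]

theorem cycWeight_eq_coe_sum (hc : ∀ p ∈ cpairs c, w p.1 p.2 ≠ ⊥) :
    cycWeight w c = (((cpairs c).map fun p => (w p.1 p.2).unbotD 0).sum : ℤ) := by
  rw [cycWeight]
  generalize cpairs c = L at hc ⊢
  induction L with
  | nil => simp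
  | cons p l ih =>
    simp only [List.forall_mem_cons] at hc
    rw [List.map_cons, List.sum_cons, ih hc.2, List.map_cons, List.sum_cons, WithBot.coe_add]
    obtain ⟨x, hx⟩ := WithBot.ne_bot_iff_exists.1 hc.1
    rw [← hx, WithBot.unbotD_coe]

theorem IsCycle.rank_eq (hc : IsCycle w c) (ρ : Fin n → ℤ)
    (h : ∀ u v, w u v ≠ ⊥ → ρ v ≤ ρ u) : ∀ p ∈ cpairs c, ρ p.2 = ρ p.1 := by
  intro p hp
  have := slack_eq_zero_of_le_sub ρ (g := fun _ => 0) (ε := fun p => ρ p.1 - ρ p.2) (by simp)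
    (fun p hp => sub_nonneg.2 (h _ _ (hc.2.2 p hp))) (fun p _ => by simp) p hp
  linarith

theorem MAscending.slack_eq_zero (hc : MAscending w c) (φ : Fin n → ℤ) {k : ℤ} (hk : 0 ≤ k)
    {ε : Fin n × Fin n → ℤ} (hε : ∀ p ∈ cpairs c, 0 ≤ ε p)
    (h : ∀ p ∈ cpairs c, ∀ x : ℤ, w p.1 p.2 = x → k * x + ε p ≤ φ p.1 - φ p.2) :
    ∀ p ∈ cpairs c, ε p = 0 := by
  have hsum := hc.2
  rw [cycWeight_eq_coe_sum hc.1.2.2, WithBot.coe_nonneg] at hsum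
  refine slack_eq_zero_of_le_sub φ (g := fun p => k * (w p.1 p.2).unbotD 0) ?_ hε
    fun p hp => h p hp _ ?_
  · rw [List.sum_map_mul_left]
    exact mul_nonneg hk hsum
  · obtain ⟨x, hx⟩ := WithBot.ne_bot_iff_exists.1 (hc.1.2.2 p hp)
    rw [← hx, WithBot.unbotD_coe]

theorem not_mAscending_of_potential (φ : Fin n → ℤ)
    (h : ∀ p ∈ cpairs c, ∀ x : ℤ, w p.1 p.2 = x → 2 * x + 1 ≤ φ p.1 - φ p.2) :
    ¬ MAscending w c := by
  intro hc
  obtain ⟨p, hp⟩ : ∃ p, p ∈ cpairs c :=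
    List.exists_mem_of_length_pos (by
    have := hc.1.1
    simp only [cpairs, List.length_zip, List.length_rotate, min_self]
    omega)
  exact one_ne_zero (MAscending.slack_eq_zero hc φ zero_le_two (fun _ _ => zero_le_one) h p hp)

end Cycles

section SmallCycles

variable {n : ℕ} {w : Fin n → Fin n → WithBot ℤ}

theorem mAscending_three {u v z : Fin n} (huv : u ≠ v) (hvz : v ≠ z) (huz : u ≠ z)
    {x y t : ℤ} (hx : w u v = x) (hy : w v z = y) (ht : w z u = t) (h : 0 ≤ x + y + t) :
    MAscending w [u, v, z] := by
  refine ⟨⟨by simp, by simp [huv, hvz, huz], by simp [cpairs, hx, hy, ht]⟩, ?_⟩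
  simpa [cycWeight, cpairs, hx, hy, ht, ← WithBot.coe_add, ← add_assoc] using h

theorem mAscending_four_iff {y₁ y₂ y₃ y₄ : Fin n} :
    MAscending w [y₁, y₂, y₃, y₄] ↔ [y₁, y₂, y₃, y₄].Nodup ∧
      ∃ f₀ f₁ f₂ f₃ : ℤ, w y₁ y₂ = f₀ ∧ w y₂ y₃ = f₁ ∧ w y₃ y₄ = f₂ ∧ w y₄ y₁ = f₃ ∧
        0 ≤ f₀ + f₁ + f₂ + f₃ := by
  simp only [MAscending, IsCycle, List.length_cons, List.length_nil, zero_add, Nat.reduceAdd,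
    Nat.reduceLeDiff, List.nodup_cons, List.mem_cons, List.not_mem_nil, or_false, not_or,
    ← and_assoc, not_false_eq_true, List.nodup_nil, and_self, and_true, cpairs,
    List.rotate_cons_succ, List.cons_append, List.nil_append, List.rotate_zero,
    List.zip_cons_cons, List.zip_nil_right, ne_eq, forall_eq_or_imp, forall_eq, true_and,
    cycWeight, List.map_cons, List.map_nil, List.sum_cons, List.sum_nil, add_zero]
  induction w y₁ y₂ <;> induction w y₂ y₃ <;> induction w y₃ y₄ <;> induction w y₄ y₁ <;>
    simp [← WithBot.coe_add, ← add_assoc]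

end SmallCycles

section Valid

variable {n : ℕ} {a b : Fin n → Fin n → ℤ} {w : Fin n → Fin n → WithBot ℤ} {u v : Fin n}

theorem ValidW.ne_of_ne_bot (hw : ValidW a b w) (h : w u v ≠ ⊥) : u ≠ v := by
  rintro rfl
  exact h (hw.1 u)

theorem ValidW.le_b (hw : ValidW a b w) {x : ℤ} (hx : w u v = x) : x ≤ b u v := by
  have huv : u ≠ v := hw.ne_of_ne_bot (by simp [hx])
  exact_mod_cast hx ▸ ((hw.2 u v huv).1 (by simp [hx])).2

theorem ValidW.a_le (hw : ValidW a b w) {x : ℤ} (hx : w u v = x) : a u v ≤ x := by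
  have huv : u ≠ v := hw.ne_of_ne_bot (by simp [hx])
  exact_mod_cast hx ▸ ((hw.2 u v huv).1 (by simp [hx])).1

theorem ValidW.add_eq_neg_one_s12 (hw : ValidW a b w) {x y : ℤ} (hx : w u v = x) (hy : w v u = y) :
    x + y = -1 := by
  have huv : u ≠ v := hw.ne_of_ne_bot (by simp [hx])
  have := (hw.2 u v huv).2.2 x y hx hy
  omega

theorem ValidW.eq_b_of_eq_bot (hw : ValidW a b w) (huv : u ≠ v) (h : w v u = ⊥) :
    w u v = b u v :=
  (hw.2 v u huv.symm).2.1.1 h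

end Valid

/-- The bounds of a separated deformation, extended to all ordered pairs of distinct indices. -/
structure SeparatedBounds {n : ℕ} (a b : Fin n → Fin n → ℤ) : Prop where
  a_eq_neg_b : ∀ u v, u ≠ v → a u v = -b v u
  b_nonneg : ∀ u v, u ≠ v → 0 ≤ b u v

namespace SeparatedBounds

variable {n : ℕ} {a b : Fin n → Fin n → ℤ}

theorem of_lt (hsym : ∀ i j : Fin n, i < j → a j i = -(b i j) ∧ b j i = -(a i j))
    (hsep : ∀ i j : Fin n, i < j → a i j ≤ 0 ∧ 0 ≤ b i j) : SeparatedBounds a b where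
  a_eq_neg_b u v huv := by
    rcases huv.lt_or_gt with h | h
    · linarith [(hsym u v h).2]
    · exact (hsym v u h).1
  b_nonneg u v huv := by
    rcases huv.lt_or_gt with h | h
    · exact (hsep u v h).2
    · linarith [(hsym v u h).2, (hsep v u h).1]

theorem a_nonpos (hs : SeparatedBounds a b) {u v : Fin n} (huv : u ≠ v) : a u v ≤ 0 := by
  linarith [hs.a_eq_neg_b u v huv, hs.b_nonneg v u huv.symm]

end SeparatedBounds

section Rank

variable {n : ℕ}

def rankW (b : Fin n → Fin n → ℤ) (r : Fin n → ℕ) (x : Fin n → Fin n → ℤ) (u v : Fin n) :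
    WithBot ℤ :=
  if r v < r u then x u v
  else if r u < r v ∧ x v u ≠ b v u then ((-1 - x v u : ℤ) : WithBot ℤ) else ⊥

variable {a b : Fin n → Fin n → ℤ} {r : Fin n → ℕ} {x : Fin n → Fin n → ℤ} {u v : Fin n}

theorem rankW_of_lt (h : r v < r u) : rankW b r x u v = x u v := if_pos h

theorem rankW_of_gt (h : r u < r v) :
    rankW b r x u v = if x v u = b v u then ⊥ else ((-1 - x v u : ℤ) : WithBot ℤ) := by
  by_cases he : x v u = b v u <;> simp [rankW, h, h.not_gt, he]

theorem rankW_eq_coe {y : ℤ} (h : rankW b r x u v = y) :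
    (r v < r u ∧ y = x u v) ∨ (r u < r v ∧ x v u ≠ b v u ∧ y = -1 - x v u) := by
  unfold rankW at h
  split_ifs at h with h₁ h₂
  · exact Or.inl ⟨h₁, by exact_mod_cast h.symm⟩
  · exact Or.inr ⟨h₂.1, h₂.2, by exact_mod_cast h.symm⟩
  · exact absurd h.symm WithBot.coe_ne_bot

theorem validW_rankW (hr : Function.Injective r) (hab : ∀ u v, u ≠ v → a u v = -b v u)
    (hx : ∀ u v, r v < r u → a u v ≤ x u v ∧ x u v ≤ b u v) : ValidW a b (rankW b r x) := by
  refine ⟨fun u => by simp [rankW], fun u v huv => ?_⟩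
  have h₁ := hab u v huv
  have h₂ := hab v u huv.symm
  rcases (hr.ne huv).lt_or_gt with h | h
  · rw [rankW_of_gt h, rankW_of_lt h]
    have := hx v u h
    split_ifs with he
    · simp [he]
    · simp only [ne_eq, WithBot.coe_ne_bot, not_false_eq_true, WithBot.coe_le_coe,
        forall_const, WithBot.coe_inj, he, forall_apply_eq_imp_iff, forall_eq', true_and]
      omega
  · rw [rankW_of_lt h, rankW_of_gt h]
    have := hx u v h
    split_ifs with he
    · simpa [he] using this.1.trans this.2
    · simp only [ne_eq, WithBot.coe_ne_bot, not_false_eq_true, WithBot.coe_le_coe,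
        forall_const, WithBot.coe_inj, false_iff, forall_apply_eq_imp_iff, forall_eq', and_true]
      omega

end Rank

section ListRank

variable {n : ℕ} {l : List (Fin n)} {u : Fin n}

def listRank (l : List (Fin n)) (u : Fin n) : ℕ := if u ∈ l then l.idxOf u else l.length + u

theorem listRank_lt_length (hu : u ∈ l) : listRank l u < l.length := by
  simpa [listRank, hu] using List.idxOf_lt_length_iff.2 hu

theorem length_le_listRank (hu : u ∉ l) : l.length ≤ listRank l u := by
  simp [listRank, hu]

theorem listRank_injective : Function.Injective (listRank l) := by
  intro u v h
  by_cases hu : u ∈ l <;> by_cases hv : v ∈ l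
  · simpa [listRank, hu, hv, List.idxOf_inj hu] using h
  · have := listRank_lt_length (l := l) hu; have := length_le_listRank (l := l) hv; omega
  · have := listRank_lt_length (l := l) hv; have := length_le_listRank (l := l) hu; omega
  · simp only [listRank, hu, hv, if_false] at h
    exact Fin.ext (by omega)

variable {b x : Fin n → Fin n → ℤ} {c : List (Fin n)}

/-- A pair with an endpoint outside `l` is one-way and points down in rank, so the layer `ρ`
below never increases along an edge and is therefore constant along a cycle. -/
theorem IsCycle.mem_of_rankW_listRank (hx : ∀ u v, u ∉ l → x u v = b u v)
    (hc : IsCycle (rankW b (listRank l) x) c) :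
    ∀ p ∈ cpairs c, p.1 ∈ l ∧ p.2 ∈ l := by
  set ρ : Fin n → ℤ := fun u => if u ∈ l then 0 else (listRank l u : ℤ) + 1 with hρ
  have hdown : ∀ u v, rankW b (listRank l) x u v ≠ ⊥ → ρ v ≤ ρ u := by
    intro u v huv
    obtain ⟨y, hy⟩ := WithBot.ne_bot_iff_exists.1 huv
    rcases rankW_eq_coe hy.symm with ⟨hlt, -⟩ | ⟨hlt, hne, -⟩
    · by_cases hv : v ∈ l
      · simp only [hρ, hv, if_true]
        split_ifs <;> omega
      · have hu : u ∉ l := fun hu => by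
          have := listRank_lt_length hu; have := length_le_listRank hv; omega
        simp only [hρ, hu, hv, if_false]
        omega
    · have hv : v ∈ l := by_contra fun hv => hne (hx v u hv)
      have hu : u ∈ l := by_contra fun hu => by
        have := listRank_lt_length hv; have := length_le_listRank hu; omega
      simp [hρ, hu, hv]
  intro p hp
  have heq := hc.rank_eq ρ hdown p hp
  by_contra hpl
  have hne : p.1 ≠ p.2 := fun h => hc.2.2 p hp (by simp [h, rankW])
  by_cases h₁ : p.1 ∈ l <;> by_cases h₂ : p.2 ∈ l
  · exact hpl ⟨h₁, h₂⟩
  all_goals simp only [hρ, h₁, h₂, if_true, if_false] at heq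
  · omega
  · omega
  · exact hne (listRank_injective (l := l) (by omega))

end ListRank

section Lipschitz

variable {n : ℕ} {a b : Fin n → Fin n → ℤ} {i j k : Fin n} {p q : ℤ}

def tripleW (b : Fin n → Fin n → ℤ) (i j k : Fin n) (p q : ℤ) : Fin n → Fin n → WithBot ℤ :=
  rankW b (listRank [k, j, i]) fun u v =>
    if u = i ∧ v = j then p else if u = j ∧ v = k then q else b u v

theorem listRank_triple (hij : i ≠ j) (hjk : j ≠ k) (hik : i ≠ k) :
    listRank [k, j, i] k = 0 ∧ listRank [k, j, i] j = 1 ∧ listRank [k, j, i] i = 2 := by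
  simp [listRank, List.idxOf_cons_ne, hjk.symm, hik.symm, hij.symm]

theorem tripleW_apply (hij : i ≠ j) (hjk : j ≠ k) (hik : i ≠ k) :
    tripleW b i j k p q i j = p ∧ tripleW b i j k p q j k = q ∧
      tripleW b i j k p q i k = b i k := by
  obtain ⟨rk, rj, ri⟩ := listRank_triple hij hjk hik
  refine ⟨?_, ?_, ?_⟩ <;> rw [tripleW, rankW_of_lt (by omega)] <;> simp [hij.symm, hjk.symm, hij]

theorem validW_tripleW (hs : SeparatedBounds a b) (hp : 0 ≤ p ∧ p ≤ b i j)
    (hq : 0 ≤ q ∧ q ≤ b j k) : ValidW a b (tripleW b i j k p q) := by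
  refine validW_rankW listRank_injective hs.a_eq_neg_b fun u v huv => ?_
  have hne : u ≠ v := fun h => by simp [h] at huv
  have := hs.a_nonpos hne
  have := hs.b_nonneg u v hne
  split_ifs with h₁ h₂
  · obtain ⟨rfl, rfl⟩ := h₁; omega
  · obtain ⟨rfl, rfl⟩ := h₂; omega
  · omega

/-- One of the pairs `{i, j}`, `{j, k}` is one-way, which makes room for a strict potential. -/
theorem mAcyclic_tripleW (hs : SeparatedBounds a b) (hij : i ≠ j) (hjk : j ≠ k) (hik : i ≠ k)
    (hp : 0 ≤ p) (hq : 0 ≤ q) (hpq : p = b i j ∨ q = b j k) :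
    MAcyclic (tripleW b i j k p q) := by
  intro c hc
  obtain ⟨rk, rj, ri⟩ := listRank_triple hij hjk hik
  have hmem := hc.1.mem_of_rankW_listRank fun u v hu => by
    simp only [List.mem_cons, List.not_mem_nil, or_false, not_or] at hu
    simp [hu.2.1, hu.2.2]
  have := hs.b_nonneg i k hik
  rcases hpq with rfl | rfl
  · refine not_mAscending_of_potential
      (fun u => if u = i then 2 * q + 2 + 2 * b i j + 2 * b i k else if u = j then 2 * q + 1
        else 0) (fun ⟨u, v⟩ he y hy => ?_) hc
    obtain ⟨hu, hv⟩ := hmem _ he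
    simp only [List.mem_cons, List.not_mem_nil, or_false] at hu hv
    rcases hu with rfl | rfl | rfl <;> rcases hv with rfl | rfl | rfl <;>
      rcases rankW_eq_coe hy with ⟨h₁, h₂⟩ | ⟨h₁, h₂, h₃⟩ <;>
      simp_all <;> omega
  · refine not_mAscending_of_potential
      (fun u => if u = i then 0 else if u = j then -(2 * p + 1)
        else -(2 * p + 2 * b j k + 2 + 2 * b i k)) (fun ⟨u, v⟩ he y hy => ?_) hc
    obtain ⟨hu, hv⟩ := hmem _ he
    simp only [List.mem_cons, List.not_mem_nil, or_false] at hu hv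
    rcases hu with rfl | rfl | rfl <;> rcases hv with rfl | rfl | rfl <;>
      rcases rankW_eq_coe hy with ⟨h₁, h₂⟩ | ⟨h₁, h₂, h₃⟩ <;>
      simp_all <;> omega

theorem WeakTriangle.b_le_add_add_one (hwt : WeakTriangle a b) (hs : SeparatedBounds a b)
    (hij : i ≠ j) (hjk : j ≠ k) (hik : i ≠ k) (hp : 0 ≤ p ∧ p ≤ b i j)
    (hq : 0 ≤ q ∧ q ≤ b j k) (hpq : p = b i j ∨ q = b j k) : b i k ≤ p + q + 1 := by
  obtain ⟨hwij, hwjk, hwik⟩ := tripleW_apply (b := b) (p := p) (q := q) hij hjk hik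
  have := hwt _ (validW_tripleW hs hp hq) (mAcyclic_tripleW hs hij hjk hik hp.1 hq.1 hpq)
    i j k hij hjk hik (by rw [hwij]; exact_mod_cast hp.1) (by rw [hwjk]; exact_mod_cast hq.1)
  rw [hwij, hwjk, hwik] at this
  exact_mod_cast this

theorem WeakTriangle.b_le_b_add_one_snd (hwt : WeakTriangle a b) (hs : SeparatedBounds a b)
    (hij : i ≠ j) (hjk : j ≠ k) (hik : i ≠ k) : b i k ≤ b i j + 1 := by
  simpa using hwt.b_le_add_add_one hs hij hjk hik ⟨hs.b_nonneg i j hij, le_rfl⟩ ⟨le_rfl,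
    hs.b_nonneg j k hjk⟩ (Or.inl rfl)

theorem WeakTriangle.b_le_b_add_one_fst (hwt : WeakTriangle a b) (hs : SeparatedBounds a b)
    (hij : i ≠ j) (hjk : j ≠ k) (hik : i ≠ k) : b i k ≤ b j k + 1 := by
  simpa [add_comm] using hwt.b_le_add_add_one hs hij hjk hik ⟨le_rfl, hs.b_nonneg i j hij⟩
    ⟨hs.b_nonneg j k hjk, le_rfl⟩ (Or.inr rfl)

end Lipschitz

section Forward

variable {n : ℕ} {a b : Fin n → Fin n → ℤ} {w : Fin n → Fin n → WithBot ℤ}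

def HasCrossingPattern (b : Fin n → Fin n → ℤ) : Prop :=
  ∃ i₁ i₂ j₁ j₂ : Fin n, i₁ ≠ i₂ ∧ i₁ ≠ j₁ ∧ i₁ ≠ j₂ ∧ i₂ ≠ j₁ ∧ i₂ ≠ j₂ ∧ j₁ ≠ j₂ ∧
    b i₁ j₁ < b i₁ j₂ ∧ b i₂ j₂ < b i₂ j₁

theorem MAscending.rotate_four {y₁ y₂ y₃ y₄ : Fin n} (hc : MAscending w [y₁, y₂, y₃, y₄]) :
    MAscending w [y₂, y₃, y₄, y₁] := by
  obtain ⟨hnd, f₀, f₁, f₂, f₃, h₀, h₁, h₂, h₃, hsum⟩ := mAscending_four_iff.1 hc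
  refine mAscending_four_iff.2 ⟨?_, f₁, f₂, f₃, f₀, h₁, h₂, h₃, h₀, by omega⟩
  simp only [List.nodup_cons, List.mem_cons, List.not_mem_nil, or_false] at hnd ⊢
  tauto

theorem add_add_lt_zero_of_forall_not_mAscending (hshort : ∀ c, MAscending w c → ¬ c.length < 4)
    {u v z : Fin n} (huv : u ≠ v) (hvz : v ≠ z) (huz : u ≠ z) {x y t : ℤ}
    (hx : w u v = x) (hy : w v z = y) (ht : w z u = t) : x + y + t < 0 := by
  by_contra h
  exact hshort _ (mAscending_three huv hvz huz hx hy ht (by omega)) (by simp)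

/-- Opposite chord edges would have weights adding up to `-1`, so they would split the
ascending four-cycle into two triangles, one of them ascending. -/
theorem ValidW.chord_eq_b (hw : ValidW a b w) (hshort : ∀ c, MAscending w c → ¬ c.length < 4)
    {y₁ y₂ y₃ y₄ : Fin n} (hc : MAscending w [y₁, y₂, y₃, y₄]) (h₁₃ : w y₁ y₃ ≠ ⊥) :
    w y₁ y₃ = b y₁ y₃ := by
  obtain ⟨hnd, f₀, f₁, f₂, f₃, h₀, h₁, h₂, h₃, hsum⟩ := mAscending_four_iff.1 hc
  simp only [List.nodup_cons, List.mem_cons, List.not_mem_nil, or_false, not_or] at hnd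
  obtain ⟨⟨d₁₂, d₁₃, d₁₄⟩, ⟨d₂₃, -⟩, d₃₄, -⟩ := hnd
  refine hw.eq_b_of_eq_bot d₁₃ (by_contra fun h₃₁ => ?_)
  obtain ⟨g, hg⟩ := WithBot.ne_bot_iff_exists.1 h₁₃
  obtain ⟨g', hg'⟩ := WithBot.ne_bot_iff_exists.1 h₃₁
  have := hw.add_eq_neg_one_s12 hg.symm hg'.symm
  have := add_add_lt_zero_of_forall_not_mAscending hshort d₁₃ d₃₄ d₁₄ hg.symm h₂ h₃
  have := add_add_lt_zero_of_forall_not_mAscending hshort (Ne.symm d₁₃) d₁₂ (Ne.symm d₂₃)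
    hg'.symm h₀ h₁
  omega

theorem hasCrossingPattern_of_chords (hs : SeparatedBounds a b) (hwt : WeakTriangle a b)
    (hw : ValidW a b w) (hshort : ∀ c, MAscending w c → ¬ c.length < 4)
    {y₁ y₂ y₃ y₄ : Fin n} (hc : MAscending w [y₁, y₂, y₃, y₄])
    (h₁₃ : w y₁ y₃ ≠ ⊥) (h₄₂ : w y₄ y₂ ≠ ⊥) : HasCrossingPattern b := by
  have hb₁₃ := hw.chord_eq_b hshort hc h₁₃
  have hb₄₂ := hw.chord_eq_b hshort hc.rotate_four.rotate_four.rotate_four h₄₂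
  obtain ⟨hnd, f₀, f₁, f₂, f₃, h₀, h₁, h₂, h₃, hsum⟩ := mAscending_four_iff.1 hc
  simp only [List.nodup_cons, List.mem_cons, List.not_mem_nil, or_false, not_or] at hnd
  obtain ⟨⟨d₁₂, d₁₃, d₁₄⟩, ⟨d₂₃, d₂₄⟩, d₃₄, -⟩ := hnd
  have t₁ := add_add_lt_zero_of_forall_not_mAscending hshort d₁₃ d₃₄ d₁₄ hb₁₃ h₂ h₃
  have t₂ := add_add_lt_zero_of_forall_not_mAscending hshort (Ne.symm d₂₄) d₂₃ (Ne.symm d₃₄)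
    hb₄₂ h₁ h₂
  have hf₀ := hw.le_b h₀
  have hf₂ := hw.a_le h₂
  rw [hs.a_eq_neg_b _ _ d₃₄] at hf₂
  have l₁ := hwt.b_le_b_add_one_snd hs d₁₃ (Ne.symm d₂₃) d₁₂
  have l₂ := hwt.b_le_b_add_one_snd hs (Ne.symm d₂₄) d₂₃ (Ne.symm d₃₄)
  exact ⟨y₁, y₄, y₃, y₂, d₁₄, d₁₃, d₁₂, Ne.symm d₃₄, Ne.symm d₂₄, Ne.symm d₂₃, by omega, by omega⟩

theorem ValidW.ne_bot_or_ne_bot (hw : ValidW a b w) {u v : Fin n} (huv : u ≠ v) :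
    w u v ≠ ⊥ ∨ w v u ≠ ⊥ := by
  by_cases h : w v u = ⊥
  · exact Or.inl (by simp [hw.eq_b_of_eq_bot huv h])
  · exact Or.inr h

theorem hasCrossingPattern_of_mAscending (hs : SeparatedBounds a b) (hwt : WeakTriangle a b)
    (hw : ValidW a b w) (hshort : ∀ c, MAscending w c → ¬ c.length < 4) {c : List (Fin n)}
    (hc : MAscending w c) (hlen : c.length = 4) : HasCrossingPattern b := by
  obtain ⟨y₁, y₂, y₃, y₄, rfl⟩ : ∃ y₁ y₂ y₃ y₄, c = [y₁, y₂, y₃, y₄] := by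
    match c, hlen with
    | [y₁, y₂, y₃, y₄], _ => exact ⟨y₁, y₂, y₃, y₄, rfl⟩
  have hnd := (mAscending_four_iff.1 hc).1
  simp only [List.nodup_cons, List.mem_cons, List.not_mem_nil, or_false, not_or] at hnd
  have hc₂ := hc.rotate_four
  have hc₃ := hc₂.rotate_four
  rcases hw.ne_bot_or_ne_bot hnd.1.2.1 with h₁₃ | h₃₁ <;>
    rcases hw.ne_bot_or_ne_bot hnd.2.1.2 with h₂₄ | h₄₂
  · exact hasCrossingPattern_of_chords hs hwt hw hshort hc₂ h₂₄ h₁₃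
  · exact hasCrossingPattern_of_chords hs hwt hw hshort hc h₁₃ h₄₂
  · exact hasCrossingPattern_of_chords hs hwt hw hshort hc₃ h₃₁ h₂₄
  · exact hasCrossingPattern_of_chords hs hwt hw hshort hc₃.rotate_four h₄₂ h₃₁

end Forward

section Backward

variable {n : ℕ} {a b : Fin n → Fin n → ℤ} {i₁ i₂ j₁ j₂ : Fin n}

theorem WeakTriangle.eq_of_crossing (hwt : WeakTriangle a b) (hs : SeparatedBounds a b)
    (d₁₂ : i₁ ≠ i₂) (d₁₃ : i₁ ≠ j₁) (d₁₄ : i₁ ≠ j₂) (d₂₃ : i₂ ≠ j₁) (d₂₄ : i₂ ≠ j₂)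
    (d₃₄ : j₁ ≠ j₂) (h₁ : b i₁ j₁ < b i₁ j₂) (h₂ : b i₂ j₂ < b i₂ j₁) :
    b i₁ j₂ = b i₁ j₁ + 1 ∧ b i₂ j₂ = b i₁ j₁ ∧ b i₂ j₁ = b i₁ j₁ + 1 := by
  have := hwt.b_le_b_add_one_snd hs d₁₃ d₃₄ d₁₄
  have := hwt.b_le_b_add_one_snd hs d₂₄ (Ne.symm d₃₄) d₂₃
  have := hwt.b_le_b_add_one_fst hs d₁₂ d₂₄ d₁₄
  have := hwt.b_le_b_add_one_fst hs (Ne.symm d₁₂) d₁₃ d₂₃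
  omega

/-- The four-cycle `i₁ → j₂ → j₁ → i₂ → i₁` gets the weights `b i₁ j₂`, `0`, `-b i₂ j₁`, `0`. -/
def crossW (b : Fin n → Fin n → ℤ) (i₁ i₂ j₁ j₂ : Fin n) : Fin n → Fin n → WithBot ℤ :=
  rankW b (listRank [j₁, j₂, i₁, i₂]) fun u v =>
    if (u = i₂ ∧ v = i₁) ∨ (u = j₂ ∧ v = j₁) then 0
    else if u = i₂ ∧ v = j₁ then b u v - 1 else b u v

theorem listRank_crossing (d₁₂ : i₁ ≠ i₂) (d₁₃ : i₁ ≠ j₁) (d₁₄ : i₁ ≠ j₂) (d₂₃ : i₂ ≠ j₁)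
    (d₂₄ : i₂ ≠ j₂) (d₃₄ : j₁ ≠ j₂) :
    listRank [j₁, j₂, i₁, i₂] j₁ = 0 ∧ listRank [j₁, j₂, i₁, i₂] j₂ = 1 ∧
      listRank [j₁, j₂, i₁, i₂] i₁ = 2 ∧ listRank [j₁, j₂, i₁, i₂] i₂ = 3 := by
  simp [listRank, List.idxOf_cons_ne, d₁₂, d₁₃.symm, d₁₄.symm, d₂₃.symm, d₂₄.symm, d₃₄]

theorem validW_crossW (hs : SeparatedBounds a b) (h : 1 ≤ b i₂ j₁) :
    ValidW a b (crossW b i₁ i₂ j₁ j₂) := by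
  refine validW_rankW listRank_injective hs.a_eq_neg_b fun u v huv => ?_
  have hne : u ≠ v := fun h => by simp [h] at huv
  have := hs.a_nonpos hne
  have := hs.b_nonneg u v hne
  split_ifs with h₁ h₂
  · omega
  · obtain ⟨rfl, rfl⟩ := h₂; omega
  · omega

theorem mAscending_crossW (d₁₂ : i₁ ≠ i₂) (d₁₃ : i₁ ≠ j₁) (d₁₄ : i₁ ≠ j₂) (d₂₃ : i₂ ≠ j₁)
    (d₂₄ : i₂ ≠ j₂) (d₃₄ : j₁ ≠ j₂) (h : b i₂ j₁ ≤ b i₁ j₂) :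
    MAscending (crossW b i₁ i₂ j₁ j₂) [i₁, j₂, j₁, i₂] := by
  obtain ⟨r₃, r₄, r₁, r₂⟩ := listRank_crossing d₁₂ d₁₃ d₁₄ d₂₃ d₂₄ d₃₄
  refine mAscending_four_iff.2
    ⟨by simp [*, Ne.symm], b i₁ j₂, 0, -1 - (b i₂ j₁ - 1), 0, ?_, ?_, ?_, ?_, by omega⟩
  · rw [crossW, rankW_of_lt (by omega)]; simp [*, Ne.symm]
  · rw [crossW, rankW_of_lt (by omega)]; simp [*, Ne.symm]
  · rw [crossW, rankW_of_gt (by omega)]; simp [*, Ne.symm]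
  · rw [crossW, rankW_of_lt (by omega)]; simp [*, Ne.symm]

theorem four_dvd_length_of_mAscending_crossW (d₁₂ : i₁ ≠ i₂) (d₁₃ : i₁ ≠ j₁) (d₁₄ : i₁ ≠ j₂)
    (d₂₃ : i₂ ≠ j₁) (d₂₄ : i₂ ≠ j₂) (d₃₄ : j₁ ≠ j₂)
    (hb : b i₁ j₂ = b i₁ j₁ + 1 ∧ b i₂ j₂ = b i₁ j₁ ∧ b i₂ j₁ = b i₁ j₁ + 1) {c : List (Fin n)}
    (hc : MAscending (crossW b i₁ i₂ j₁ j₂) c) : 4 ∣ c.length := by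
  obtain ⟨r₃, r₄, r₁, r₂⟩ := listRank_crossing d₁₂ d₁₃ d₁₄ d₂₃ d₂₄ d₃₄
  have hmem := hc.1.mem_of_rankW_listRank fun u v hu => by
    simp only [List.mem_cons, List.not_mem_nil, or_false, not_or] at hu
    simp [hu.2.1, hu.2.2.2]
  -- The slack vanishes exactly on the edges of the four-cycle `[i₁, j₂, j₁, i₂]`.
  have hslack := hc.slack_eq_zero (fun u => if u = j₁ ∨ u = j₂ then -2 * b i₂ j₁ else 0)
    zero_le_two (ε := fun e => if e ∈ cpairs [i₁, j₂, j₁, i₂] then 0 else 2)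
    (fun _ _ => by split_ifs <;> omega) ?_
  · have := length_dvd_of_forall_mem_cpairs (C := [i₁, j₂, j₁, i₂]) (by simp [*, Ne.symm])
      fun e he => by simpa using hslack e he
    simpa using this
  · rintro ⟨u, v⟩ he y hy
    obtain ⟨hu, hv⟩ := hmem _ he
    simp only [List.mem_cons, List.not_mem_nil, or_false] at hu hv
    rcases hu with rfl | rfl | rfl | rfl <;> rcases hv with rfl | rfl | rfl | rfl <;>
      rcases rankW_eq_coe hy with ⟨h₁, h₂⟩ | ⟨h₁, h₂, h₃⟩ <;>
      simp_all [cpairs, Ne.symm] <;> omega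

theorem exists_validW_of_hasCrossingPattern (hs : SeparatedBounds a b) (hwt : WeakTriangle a b)
    (h : HasCrossingPattern b) :
    ∃ w : Fin n → Fin n → WithBot ℤ, ValidW a b w ∧
      (∃ c : List (Fin n), MAscending w c ∧ c.length = 4) ∧
      (∀ c : List (Fin n), MAscending w c → ¬ c.length < 4) := by
  obtain ⟨i₁, i₂, j₁, j₂, d₁₂, d₁₃, d₁₄, d₂₃, d₂₄, d₃₄, h₁, h₂⟩ := h
  have hb := hwt.eq_of_crossing hs d₁₂ d₁₃ d₁₄ d₂₃ d₂₄ d₃₄ h₁ h₂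
  have := hs.b_nonneg i₁ j₁ d₁₃
  refine ⟨crossW b i₁ i₂ j₁ j₂, validW_crossW hs (by omega),
    ⟨_, mAscending_crossW d₁₂ d₁₃ d₁₄ d₂₃ d₂₄ d₃₄ (by omega), rfl⟩, fun c hc hlt => ?_⟩
  have := four_dvd_length_of_mAscending_crossW d₁₂ d₁₃ d₁₄ d₂₃ d₂₄ d₃₄ hb hc
  have := hc.1.1
  omega

end Backward

theorem stmt12_general (n : ℕ) (a b : Fin n → Fin n → ℤ)
    (hsym : ∀ i j : Fin n, i < j → a j i = -(b i j) ∧ b j i = -(a i j))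
    (hsep : ∀ i j : Fin n, i < j → a i j ≤ 0 ∧ 0 ≤ b i j)
    (hwt : WeakTriangle a b) :
    (∃ w : Fin n → Fin n → WithBot ℤ, ValidW a b w ∧
        (∃ c : List (Fin n), MAscending w c ∧ c.length = 4) ∧
        (∀ c : List (Fin n), MAscending w c → ¬ c.length < 4)) ↔
      (∃ i₁ i₂ j₁ j₂ : Fin n, i₁ ≠ i₂ ∧ i₁ ≠ j₁ ∧ i₁ ≠ j₂ ∧ i₂ ≠ j₁ ∧ i₂ ≠ j₂ ∧ j₁ ≠ j₂ ∧
        b i₁ j₁ < b i₁ j₂ ∧ b i₂ j₂ < b i₂ j₁) := by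
  have hs := SeparatedBounds.of_lt hsym hsep
  constructor
  · rintro ⟨w, hw, ⟨c, hc, hlen⟩, hshort⟩
    exact hasCrossingPattern_of_mAscending hs hwt hw hshort hc hlen
  · exact exists_validW_of_hasCrossingPattern hs hwt

theorem stmt12 (n : ℕ) (a b : Fin n → Fin n → ℤ)
    (hab : ∀ i j : Fin n, i < j → a i j ≤ b i j)
    (hsym : ∀ i j : Fin n, i < j → a j i = -(b i j) ∧ b j i = -(a i j))
    (hsep : ∀ i j : Fin n, i < j → a i j ≤ 0 ∧ 0 ≤ b i j)
    (hwt : WeakTriangle a b) :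
    (∃ w : Fin n → Fin n → WithBot ℤ, ValidW a b w ∧
        (∃ c : List (Fin n), MAscending w c ∧ c.length = 4) ∧
        (∀ c : List (Fin n), MAscending w c → ¬ c.length < 4)) ↔
      (∃ i₁ i₂ j₁ j₂ : Fin n, i₁ ≠ i₂ ∧ i₁ ≠ j₁ ∧ i₁ ≠ j₂ ∧ i₂ ≠ j₁ ∧ i₂ ≠ j₂ ∧ j₁ ≠ j₂ ∧
        b i₁ j₁ < b i₁ j₂ ∧ b i₂ j₂ < b i₂ j₁) :=
  stmt12_general n a b hsym hsep hwt
end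

section
/- Let a ≥ 1 and n ≥ 1 be integers, let w be a valid m-acyclic weight function of the extended Shi arrangement 𝒜^{a,a+1}_{n−1}, and let (f(1),…,f(n)) be its Pak–Stanley label. Then (f(1),…,f(n)) is an a-parking function of length n. -/
/-- Lower bounds of the extended Shi arrangement `A^{a,a+1}_{n-1}`:
`α(i,j) = 1 - a` for `i < j`, extended by `α(j,i) = -β(i,j) = -a`. -/
def shiAlpha {n : ℕ} (a : ℤ) (u v : Fin n) : ℤ := if u < v then 1 - a else -a

/-- Upper bounds of the extended Shi arrangement `A^{a,a+1}_{n-1}`: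
`β(i,j) = a` for `i < j`, extended by `β(j,i) = -α(i,j) = a - 1`. -/
def shiBeta {n : ℕ} (a : ℤ) (u v : Fin n) : ℤ := if u < v then a else a - 1

/-- `f` is the Pak–Stanley label of the weight function `w` with order of
gains `σ`:  `f i` is the sum of the weights `w i j` over the `j` succeeding
`i` in `σ` (the separations), plus the number of such `j` with `j < i`
(the inversions). -/
def IsPSLabel {n : ℕ} (σ : Equiv.Perm (Fin n)) (w : Fin n → Fin n → WithBot ℤ)
    (f : Fin n → ℤ) : Prop :=
  ∀ i : Fin n, (f i : WithBot ℤ) =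
    (∑ j ∈ Finset.univ.filter fun j => σ.symm i < σ.symm j, w i j)
      + (((Finset.univ.filter fun j => σ.symm i < σ.symm j ∧ j < i).card : ℤ) : WithBot ℤ)

/-- `f` is an `a`-parking function: it consists of nonnegative integers and
its weakly increasing rearrangement `f̃` satisfies `f̃ i ≤ a * i`
(`0`-indexed), i.e. `f̃(i) ≤ a (i - 1)` in `1`-indexed notation. -/
def IsAPark {n : ℕ} (a : ℤ) (f : Fin n → ℤ) : Prop :=
  (∀ i, 0 ≤ f i) ∧
  ∃ τ : Equiv.Perm (Fin n), Monotone (f ∘ τ) ∧ ∀ i : Fin n, f (τ i) ≤ a * (i : ℤ)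

open Finset

theorem Tuple.apply_sort_le_of_apply_perm_le {n : ℕ} {α : Type*} [LinearOrder α]
    {f b : Fin n → α} (hb : Monotone b) (π : Equiv.Perm (Fin n)) (h : ∀ m, f (π m) ≤ b m)
    (k : Fin n) : f (sort f k) ≤ b k := by
  classical
  rw [← Function.comp_apply (f := f), ← lt_card_le_iff_apply_le_of_monotone (monotone_sort f)]
  calc (k : ℕ) < #(Iic k) := by simp
    _ ≤ #{i | (f ∘ sort f) i ≤ b k} := by
      refine card_le_card_of_injOn (fun m => (sort f).symm (π m)) (fun m hm => ?_)
        (fun x _ y _ hxy => by simpa using hxy)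
      simpa using (h m).trans (hb (mem_Iic.mp hm))

theorem Equiv.Perm.card_filter_lt_symm_apply {n : ℕ} (σ : Equiv.Perm (Fin n)) (p : Fin n) :
    #{j | p < σ.symm j} = n - 1 - p := by
  rw [← Fin.card_Ioi, ← card_map σ.symm.toEmbedding]
  congr 1
  ext j
  simp

theorem ValidW.le_of_nonneg {n : ℕ} {α β : Fin n → Fin n → ℤ} {w : Fin n → Fin n → WithBot ℤ}
    (hw : ValidW α β w) {i j : Fin n} (hij : i ≠ j) (h : 0 ≤ w i j) : w i j ≤ β i j :=
  ((hw.2 i j hij).1 (ne_bot_of_le_ne_bot WithBot.coe_ne_bot h)).2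

theorem shiBeta_add_ite_le {n : ℕ} (a : ℤ) {i j : Fin n} (hij : i ≠ j) :
    shiBeta a i j + (if j < i then 1 else 0) ≤ a := by
  unfold shiBeta
  rcases hij.lt_or_gt with h | h <;> simp [h, h.not_gt]

section PakStanley

variable {n : ℕ} {σ : Equiv.Perm (Fin n)} {w : Fin n → Fin n → WithBot ℤ} {f : Fin n → ℤ}

theorem nonneg_of_symm_lt_symm (hσ : ∀ i j : Fin n, i < j → 0 ≤ w (σ i) (σ j)) {i j : Fin n}
    (h : σ.symm i < σ.symm j) : 0 ≤ w i j := by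
  simpa using hσ _ _ h

theorem IsPSLabel.nonneg (hf : IsPSLabel σ w f) (hσ : ∀ i j : Fin n, i < j → 0 ≤ w (σ i) (σ j))
    (i : Fin n) : 0 ≤ f i := by
  have : (0 : WithBot ℤ) ≤ f i := by
    rw [hf i]
    exact add_nonneg (sum_nonneg fun j hj => nonneg_of_symm_lt_symm hσ (by simpa using hj))
      (by exact_mod_cast Nat.zero_le _)
  exact_mod_cast this

theorem IsPSLabel.le_mul_card {α β : Fin n → Fin n → ℤ} {c : ℤ} (hf : IsPSLabel σ w f)
    (hw : ValidW α β w) (hβ : ∀ i j, i ≠ j → β i j + (if j < i then 1 else 0) ≤ c)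
    (hσ : ∀ i j : Fin n, i < j → 0 ≤ w (σ i) (σ j)) (i : Fin n) :
    f i ≤ c * #{j | σ.symm i < σ.symm j} := by
  have key : ∀ j ∈ ({j | σ.symm i < σ.symm j} : Finset (Fin n)),
      w i j + ((if j < i then 1 else 0 : ℤ) : WithBot ℤ) ≤ c := by
    intro j hj
    have hlt : σ.symm i < σ.symm j := by simpa using hj
    have hij : i ≠ j := by rintro rfl; exact hlt.false
    calc w i j + ((if j < i then 1 else 0 : ℤ) : WithBot ℤ)
        ≤ β i j + ((if j < i then 1 else 0 : ℤ) : WithBot ℤ) :=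
          add_le_add_left (hw.le_of_nonneg hij (nonneg_of_symm_lt_symm hσ hlt)) _
      _ ≤ c := by exact_mod_cast hβ i j hij
  have hsum := sum_le_sum key
  rw [sum_add_distrib, ← WithBot.coe_sum, sum_boole, filter_filter, sum_const, ← hf i] at hsum
  rw [mul_comm, ← nsmul_eq_mul]
  exact_mod_cast hsum

end PakStanley

theorem stmt14_general (n : ℕ) (a : ℤ) (ha : 1 ≤ a)
    (w : Fin n → Fin n → WithBot ℤ)
    (hw : ValidW (shiAlpha a) (shiBeta a) w)
    (σ : Equiv.Perm (Fin n)) (hσ : ∀ i j : Fin n, i < j → 0 ≤ w (σ i) (σ j))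
    (f : Fin n → ℤ) (hf : IsPSLabel σ w f) :
    IsAPark a f := by
  have hmono : Monotone fun k : Fin n => a * (k : ℤ) := fun k l hkl =>
    mul_le_mul_of_nonneg_left (by exact_mod_cast hkl) (by omega)
  refine ⟨hf.nonneg hσ, Tuple.sort f, Tuple.monotone_sort f,
    Tuple.apply_sort_le_of_apply_perm_le hmono (Fin.revPerm.trans σ) fun m => ?_⟩
  calc f (σ m.rev) ≤ a * #{j | σ.symm (σ m.rev) < σ.symm j} :=
        hf.le_mul_card hw (fun _ _ => shiBeta_add_ite_le a) hσ _
    _ = a * m := by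
      rw [σ.symm_apply_apply, σ.card_filter_lt_symm_apply, Fin.val_rev]
      congr 2
      omega

theorem stmt14 (n : ℕ) (hn : 1 ≤ n) (a : ℤ) (ha : 1 ≤ a)
    (w : Fin n → Fin n → WithBot ℤ)
    (hw : ValidW (shiAlpha a) (shiBeta a) w) (hac : MAcyclic w)
    (σ : Equiv.Perm (Fin n)) (hσ : ∀ i j : Fin n, i < j → 0 ≤ w (σ i) (σ j))
    (f : Fin n → ℤ) (hf : IsPSLabel σ w f) :
    IsAPark a f :=
  stmt14_general n a ha w hw σ hσ f hf
end

section
/- Let a ≥ 1 and n ≥ 1 be integers, let w be a valid m-acyclic weight function of the extended Shi arrangement 𝒜^{a,a+1}_{n−1} with order of gains σ and Pak–Stanley label (f(1),…,f(n)). If i and j are indices with σ⁻¹(i) < σ⁻¹(j) and either i > j or w(i,j) > 0 holds, then f(i) > f(j). -/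
/-!
For `k` after `j` in the order of gains, compare the contributions `c(u, k) = w(u, k) + [k < u]`
of `k` to `f(j)` and to `f(i)`. If `w(k, i) = -∞`, then `w(i, k)` is maximal, and since
`β(u, k) + [k < u] = a` for all `u ≠ k`, we get `c(i, k) = a ≥ c(j, k)`. Otherwise the triangle
`i → j → k → i` is not ascending, so `w(i, j) + w(j, k) ≤ w(i, k)`; together with `j < i` or
`w(i, j) ≥ 1` this gives `c(j, k) ≤ c(i, k)`. The successors of `j` are successors of `i`, and
`f(i)` has in addition the term `c(i, j) ≥ 1` and further nonnegative terms.
-/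

open Finset

namespace ShiArrangement

variable {n : ℕ}

lemma coe_unbotD_of_nonneg {x : WithBot ℤ} (hx : 0 ≤ x) :
    ((x.unbotD 0 : ℤ) : WithBot ℤ) = x := by
  lift x to ℤ using ne_bot_of_le_ne_bot WithBot.coe_ne_bot hx
  rfl

lemma one_le_unbotD_of_pos {x : WithBot ℤ} (hx : 0 < x) : 1 ≤ x.unbotD 0 := by
  have := (WithBot.lt_unbotD_iff (a := 0) hx.ne_bot).mpr hx
  omega

def successors (σ : Equiv.Perm (Fin n)) (u : Fin n) : Finset (Fin n) :=
  univ.filter fun k => σ.symm u < σ.symm k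

@[simp]
lemma mem_successors {σ : Equiv.Perm (Fin n)} {u k : Fin n} :
    k ∈ successors σ u ↔ σ.symm u < σ.symm k := by
  simp [successors]

lemma insert_successors_subset {σ : Equiv.Perm (Fin n)} {i j : Fin n}
    (hij : σ.symm i < σ.symm j) : insert j (successors σ j) ⊆ successors σ i := by
  intro k hk
  rcases mem_insert.mp hk with rfl | hk
  · exact mem_successors.mpr hij
  · exact mem_successors.mpr (hij.trans (mem_successors.mp hk))

/-- The term of the Pak–Stanley label `f u` indexed by `k`; the value `-∞` of `w u k` is read
as `0`, but it never occurs for `k` after `u` in an order of gains. -/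
def contribution (w : Fin n → Fin n → WithBot ℤ) (u k : Fin n) : ℤ :=
  (w u k).unbotD 0 + if k < u then 1 else 0

def IsOrderOfGains (σ : Equiv.Perm (Fin n)) (w : Fin n → Fin n → WithBot ℤ) : Prop :=
  ∀ i j : Fin n, i < j → 0 ≤ w (σ i) (σ j)

namespace IsOrderOfGains

variable {σ : Equiv.Perm (Fin n)} {w : Fin n → Fin n → WithBot ℤ} {u v : Fin n}

lemma nonneg (hσ : IsOrderOfGains σ w) (h : σ.symm u < σ.symm v) : 0 ≤ w u v := by
  simpa using hσ _ _ h

lemma ne_bot (hσ : IsOrderOfGains σ w) (h : σ.symm u < σ.symm v) : w u v ≠ ⊥ :=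
  ne_bot_of_le_ne_bot WithBot.coe_ne_bot (hσ.nonneg h)

lemma coe_unbotD (hσ : IsOrderOfGains σ w) (h : σ.symm u < σ.symm v) :
    (((w u v).unbotD 0 : ℤ) : WithBot ℤ) = w u v :=
  coe_unbotD_of_nonneg (hσ.nonneg h)

lemma unbotD_nonneg (hσ : IsOrderOfGains σ w) (h : σ.symm u < σ.symm v) :
    0 ≤ (w u v).unbotD 0 :=
  WithBot.le_unbotD (hσ.nonneg h)

lemma contribution_nonneg (hσ : IsOrderOfGains σ w) (h : σ.symm u < σ.symm v) :
    0 ≤ contribution w u v := by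
  have := hσ.unbotD_nonneg h
  unfold contribution
  split_ifs <;> omega

lemma contribution_pos (hσ : IsOrderOfGains σ w) (h : σ.symm u < σ.symm v)
    (hvu : v < u ∨ 0 < w u v) : 0 < contribution w u v := by
  have := hσ.unbotD_nonneg h
  unfold contribution
  rcases hvu with hvu | hpos
  · simp only [hvu, if_true]
    omega
  · have := one_le_unbotD_of_pos hpos
    split_ifs <;> omega

lemma eq_sum_contribution (hσ : IsOrderOfGains σ w) {f : Fin n → ℤ} (hf : IsPSLabel σ w f)
    (u : Fin n) : f u = ∑ k ∈ successors σ u, contribution w u k := by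
  have hsum : ∑ k ∈ successors σ u, w u k =
      ((∑ k ∈ successors σ u, (w u k).unbotD 0 : ℤ) : WithBot ℤ) := by
    rw [WithBot.coe_sum]
    exact sum_congr rfl fun k hk => (hσ.coe_unbotD (mem_successors.mp hk)).symm
  have hfu := hf u
  rw [← successors, hsum, ← WithBot.coe_add, WithBot.coe_inj] at hfu
  simp only [hfu, contribution, sum_add_distrib, sum_boole, successors, filter_filter]

end IsOrderOfGains

lemma _root_.MAcyclic.triangle_weight_neg {w : Fin n → Fin n → WithBot ℤ} (hac : MAcyclic w)
    {i j k : Fin n} (hij : i ≠ j) (hik : i ≠ k) (hjk : j ≠ k) {x y z : ℤ}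
    (hx : w i j = x) (hy : w j k = y) (hz : w k i = z) : x + y + z < 0 := by
  have hpairs : cpairs [i, j, k] = [(i, j), (j, k), (k, i)] := rfl
  have hcyc : IsCycle w [i, j, k] :=
    ⟨by simp, by simp [hij, hik, hjk], by simp [hpairs, hx, hy, hz]⟩
  have hweight : cycWeight w [i, j, k] = ((x + y + z : ℤ) : WithBot ℤ) := by
    simp only [cycWeight, hpairs, List.map_cons, List.map_nil, List.sum_cons, List.sum_nil,
      hx, hy, hz, add_zero, add_assoc]
    norm_cast
  by_contra hneg
  exact hac [i, j, k] ⟨hcyc, by rw [hweight]; exact_mod_cast not_lt.mp hneg⟩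

lemma shiBeta_add_ite (a : ℤ) {u v : Fin n} (h : u ≠ v) :
    shiBeta a u v + (if v < u then 1 else 0) = a := by
  rcases h.lt_or_gt with h | h <;> simp [shiBeta, h, h.not_gt]

section Shi

variable {a : ℤ} {w : Fin n → Fin n → WithBot ℤ}

lemma contribution_eq_of_eq_bot (hw : ValidW (shiAlpha a) (shiBeta a) w) {i k : Fin n}
    (hik : i ≠ k) (h : w k i = ⊥) : contribution w i k = a := by
  rw [contribution, (hw.2 k i hik.symm).2.1.mp h, WithBot.unbotD_coe, shiBeta_add_ite a hik]

lemma contribution_le_of_ne_bot (hw : ValidW (shiAlpha a) (shiBeta a) w) {j k : Fin n}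
    (hjk : j ≠ k) (h : w j k ≠ ⊥) : contribution w j k ≤ a := by
  obtain ⟨x, hx⟩ := WithBot.ne_bot_iff_exists.mp h
  have hle : x ≤ shiBeta a j k := by
    have := ((hw.2 j k hjk).1 h).2
    rw [← hx] at this
    exact_mod_cast this
  rw [contribution, ← hx, WithBot.unbotD_coe, ← shiBeta_add_ite a hjk]
  omega

lemma contribution_le_contribution (hw : ValidW (shiAlpha a) (shiBeta a) w) (hac : MAcyclic w)
    {σ : Equiv.Perm (Fin n)} (hσ : IsOrderOfGains σ w) {i j k : Fin n}
    (hij : σ.symm i < σ.symm j) (hjk : σ.symm j < σ.symm k) (h : j < i ∨ 0 < w i j) :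
    contribution w j k ≤ contribution w i k := by
  have hik := hij.trans hjk
  have hne_ij : i ≠ j := ne_of_apply_ne σ.symm hij.ne
  have hne_ik : i ≠ k := ne_of_apply_ne σ.symm hik.ne
  have hne_jk : j ≠ k := ne_of_apply_ne σ.symm hjk.ne
  by_cases hki : w k i = ⊥
  · rw [contribution_eq_of_eq_bot hw hne_ik hki]
    exact contribution_le_of_ne_bot hw hne_jk (hσ.ne_bot hjk)
  obtain ⟨z, hz⟩ := WithBot.ne_bot_iff_exists.mp hki
  have hinv := (hw.2 i k hne_ik).2.2 _ z (hσ.coe_unbotD hik).symm hz.symm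
  have htri := hac.triangle_weight_neg hne_ij hne_ik hne_jk (hσ.coe_unbotD hij).symm
    (hσ.coe_unbotD hjk).symm hz.symm
  have := hσ.unbotD_nonneg hij
  unfold contribution
  rcases h with hji | hpos
  · split_ifs <;> omega
  · have := one_le_unbotD_of_pos hpos
    split_ifs <;> omega

end Shi

end ShiArrangement

open ShiArrangement

theorem stmt15_general (n : ℕ) (a : ℤ)
    (w : Fin n → Fin n → WithBot ℤ)
    (hw : ValidW (shiAlpha a) (shiBeta a) w) (hac : MAcyclic w)
    (σ : Equiv.Perm (Fin n)) (hσ : ∀ i j : Fin n, i < j → 0 ≤ w (σ i) (σ j))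
    (f : Fin n → ℤ) (hf : IsPSLabel σ w f)
    (i j : Fin n) (hij : σ.symm i < σ.symm j)
    (h : j < i ∨ 0 < w i j) :
    f j < f i := by
  have hgains : IsOrderOfGains σ w := hσ
  have hj : j ∉ successors σ j := by simp
  calc f j = ∑ k ∈ successors σ j, contribution w j k := hgains.eq_sum_contribution hf j
    _ ≤ ∑ k ∈ successors σ j, contribution w i k := sum_le_sum fun k hk =>
        contribution_le_contribution hw hac hgains hij (mem_successors.mp hk) h
    _ < ∑ k ∈ insert j (successors σ j), contribution w i k := by
        rw [sum_insert hj]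
        linarith [hgains.contribution_pos hij h]
    _ ≤ ∑ k ∈ successors σ i, contribution w i k :=
        sum_le_sum_of_subset_of_nonneg (insert_successors_subset hij) fun k hk _ =>
          hgains.contribution_nonneg (mem_successors.mp hk)
    _ = f i := (hgains.eq_sum_contribution hf i).symm

theorem stmt15 (n : ℕ) (hn : 1 ≤ n) (a : ℤ) (ha : 1 ≤ a)
    (w : Fin n → Fin n → WithBot ℤ)
    (hw : ValidW (shiAlpha a) (shiBeta a) w) (hac : MAcyclic w)
    (σ : Equiv.Perm (Fin n)) (hσ : ∀ i j : Fin n, i < j → 0 ≤ w (σ i) (σ j))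
    (f : Fin n → ℤ) (hf : IsPSLabel σ w f)
    (i j : Fin n) (hij : σ.symm i < σ.symm j)
    (h : j < i ∨ 0 < w i j) :
    f j < f i :=
  stmt15_general n a w hw hac σ hσ f hf i j hij h
end

section
/- Let a ≥ 1 and n ≥ 1 be integers, let w be a valid m-acyclic weight function of the a-Catalan arrangement 𝒜^{a,a}_{n−1}, and let σ be its order of gains. Then the digraph of present edges of w is strongly connected (equivalently, the corresponding region of 𝒜^{a,a}_{n−1} is bounded) if and only if w(σ(i), σ(i+1)) < a − 1 holds for all 1 ≤ i ≤ n − 1. -/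
/-- Reachability along present edges. -/
def Reaches {n : ℕ} (w : Fin n → Fin n → WithBot ℤ) : Fin n → Fin n → Prop :=
  Relation.ReflTransGen fun a b => w a b ≠ ⊥

lemma neBot_of_nonneg {x : WithBot ℤ} (h : (0:WithBot ℤ) ≤ x) : x ≠ ⊥ := by
  rintro rfl; simp at h

lemma exists_int {x : WithBot ℤ} (h : x ≠ ⊥) : ∃ c : ℤ, x = (c : WithBot ℤ) := by
  obtain ⟨c, hc⟩ := WithBot.ne_bot_iff_exists.mp h; exact ⟨c, hc.symm⟩

lemma asc3 {n : ℕ} {w : Fin n → Fin n → WithBot ℤ} (hac : MAcyclic w)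
    {x y z : Fin n} (hxy : x ≠ y) (hyz : y ≠ z) (hxz : x ≠ z)
    {c1 c2 c3 : ℤ} (h1 : w x y = c1) (h2 : w y z = c2) (h3 : w z x = c3)
    (hsum : 0 ≤ c1 + c2 + c3) : False := by
  apply hac [x, y, z]
  have hcp : cpairs [x,y,z] = [(x,y),(y,z),(z,x)] := rfl
  refine ⟨⟨by simp, by simp [hxy, hyz, hxz], ?_⟩, ?_⟩
  · intro p hp
    rw [hcp] at hp
    fin_cases hp <;> simp [h1, h2, h3]
  · have : cycWeight w [x,y,z] = ((c1+c2+c3 : ℤ) : WithBot ℤ) := by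
      simp [cycWeight, hcp, h1, h2, h3, add_assoc]
    rw [this]
    exact_mod_cast hsum

lemma asc4 {n : ℕ} {w : Fin n → Fin n → WithBot ℤ} (hac : MAcyclic w)
    {x y z t : Fin n} (hxy : x ≠ y) (hxz : x ≠ z) (hxt : x ≠ t)
    (hyz : y ≠ z) (hyt : y ≠ t) (hzt : z ≠ t)
    {c1 c2 c3 c4 : ℤ} (h1 : w x y = c1) (h2 : w y z = c2) (h3 : w z t = c3)
    (h4 : w t x = c4) (hsum : 0 ≤ c1 + c2 + c3 + c4) : False := by
  apply hac [x, y, z, t]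
  have hcp : cpairs [x,y,z,t] = [(x,y),(y,z),(z,t),(t,x)] := rfl
  refine ⟨⟨by simp, by simp [hxy, hxz, hxt, hyz, hyt, hzt], ?_⟩, ?_⟩
  · intro p hp
    rw [hcp] at hp
    fin_cases hp <;> simp [h1, h2, h3, h4]
  · have : cycWeight w [x,y,z,t] = ((c1+c2+c3+c4 : ℤ) : WithBot ℤ) := by
      simp [cycWeight, hcp, h1, h2, h3, h4, add_assoc]
    rw [this]
    exact_mod_cast hsum

section Cross
variable {n : ℕ} {a : ℤ} {w : Fin n → Fin n → WithBot ℤ} {σ : Equiv.Perm (Fin n)}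

/-- No edge crosses back over a maximal-weight consecutive gap. -/
lemma cross_absurd (ha : 1 ≤ a)
    (hw : ValidW (fun _ _ => 1 - a) (fun _ _ => a - 1) w) (hac : MAcyclic w)
    (hσ : ∀ i j : Fin n, i < j → 0 ≤ w (σ i) (σ j))
    (ii ii1 p q : Fin n) (hii : (ii:ℕ) + 1 = (ii1:ℕ)) (hq : q ≤ ii) (hp : ii1 ≤ p)
    (hmax : w (σ ii) (σ ii1) = ((a-1 : ℤ) : WithBot ℤ))
    (hedge : w (σ p) (σ q) ≠ ⊥) : False := by
  have hlt : ii < ii1 := by rw [Fin.lt_def]; omega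
  have hqp : q < p := lt_of_le_of_lt hq (lt_of_lt_of_le hlt hp)
  have hσqp : σ q ≠ σ p := fun h => (ne_of_lt hqp) (σ.injective h)
  -- lower bound on the crossing edge weight
  obtain ⟨c3, hc3⟩ := exists_int hedge
  have hb3 : (1 - a : ℤ) ≤ c3 := by
    have := ((hw.2 (σ p) (σ q) (Ne.symm hσqp)).1 hedge).1
    rw [hc3] at this
    exact_mod_cast this
  rcases eq_or_lt_of_le hq with hq' | hq' <;> rcases eq_or_lt_of_le hp with hp' | hp'
  · -- q = ii, ii1 = p : direct contradiction
    subst hq'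
    have : w (σ ii1) (σ q) = ⊥ := by
      exact ((hw.2 (σ ii1) (σ q) (fun h => (ne_of_lt hlt) (σ.injective h).symm)).2.1).2 hmax
    rw [← hp'] at hedge
    exact hedge this
  · -- q = ii, ii1 < p : triangle σ q = σ ii → σ ii1 → σ p → σ ii
    subst hq'
    obtain ⟨c2, hc2⟩ := exists_int (neBot_of_nonneg (hσ ii1 p hp'))
    have h02 : 0 ≤ c2 := by
      have := hσ ii1 p hp'; rw [hc2] at this; exact_mod_cast this
    exact asc3 hac (fun h => (ne_of_lt hlt) (σ.injective h))
      (fun h => (ne_of_lt hp') (σ.injective h))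
      (fun h => (ne_of_lt hqp) (σ.injective h)) hmax hc2 hc3 (by omega)
  · -- q < ii, ii1 = p : triangle σ q → σ ii → σ ii1 = σ p → σ q
    obtain ⟨c1, hc1⟩ := exists_int (neBot_of_nonneg (hσ q ii hq'))
    have h01 : 0 ≤ c1 := by
      have := hσ q ii hq'; rw [hc1] at this; exact_mod_cast this
    rw [← hp'] at hedge hc3
    exact asc3 hac (fun h => (ne_of_lt hq') (σ.injective h))
      (fun h => (ne_of_lt hlt) (σ.injective h))
      (fun h => (ne_of_lt (lt_trans hq' hlt)) (σ.injective h)) hc1 hmax hc3 (by omega)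
  · -- q < ii < ii1 < p : quadrilateral
    obtain ⟨c1, hc1⟩ := exists_int (neBot_of_nonneg (hσ q ii hq'))
    have h01 : 0 ≤ c1 := by
      have := hσ q ii hq'; rw [hc1] at this; exact_mod_cast this
    obtain ⟨c2, hc2⟩ := exists_int (neBot_of_nonneg (hσ ii1 p hp'))
    have h02 : 0 ≤ c2 := by
      have := hσ ii1 p hp'; rw [hc2] at this; exact_mod_cast this
    exact asc4 hac (fun h => (ne_of_lt hq') (σ.injective h))
      (fun h => (ne_of_lt (lt_trans hq' hlt)) (σ.injective h))
      (fun h => (ne_of_lt hqp) (σ.injective h))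
      (fun h => (ne_of_lt hlt) (σ.injective h))
      (fun h => (ne_of_lt (lt_trans hlt hp')) (σ.injective h))
      (fun h => (ne_of_lt hp') (σ.injective h))
      hc1 hmax hc2 hc3 (by omega)
end Cross

theorem stmt19 (n : ℕ) (hn : 1 ≤ n) (a : ℤ) (ha : 1 ≤ a)
    (w : Fin n → Fin n → WithBot ℤ)
    (hw : ValidW (fun _ _ => 1 - a) (fun _ _ => a - 1) w) (hac : MAcyclic w)
    (σ : Equiv.Perm (Fin n)) (hσ : ∀ i j : Fin n, i < j → 0 ≤ w (σ i) (σ j)) :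
    (∀ u v : Fin n, Reaches w u v) ↔
      ∀ (i : ℕ) (h : i + 1 < n),
        w (σ ⟨i, Nat.lt_of_succ_lt h⟩) (σ ⟨i + 1, h⟩) < ((a - 1 : ℤ) : WithBot ℤ) := by
  constructor
  · intro hreach i h
    by_contra hnlt
    set ii : Fin n := ⟨i, Nat.lt_of_succ_lt h⟩ with hii_def
    set ii1 : Fin n := ⟨i+1, h⟩ with hii1_def
    have hlt : ii < ii1 := Fin.mk_lt_mk.mpr (Nat.lt_succ_self i)
    have h0 : (0:WithBot ℤ) ≤ w (σ ii) (σ ii1) := hσ ii ii1 hlt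
    have hne : w (σ ii) (σ ii1) ≠ ⊥ := neBot_of_nonneg h0
    have hub : w (σ ii) (σ ii1) ≤ ((a-1 : ℤ) : WithBot ℤ) :=
      ((hw.2 (σ ii) (σ ii1) (fun hh => (ne_of_lt hlt) (σ.injective hh))).1 hne).2
    have hmax : w (σ ii) (σ ii1) = ((a-1 : ℤ) : WithBot ℤ) :=
      le_antisymm hub (not_lt.mp hnlt)
    -- any vertex reachable from σ ii1 stays strictly above i
    have key : ∀ v : Fin n, Reaches w (σ ii1) v → (ii : ℕ) < (σ.symm v : ℕ) := by
      intro v hr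
      induction hr with
      | refl => rw [Equiv.symm_apply_apply]; exact Nat.lt_succ_self i
      | @tail b c hab hbc ih =>
        by_contra hle
        push_neg at hle
        have hb : σ (σ.symm b) = b := σ.apply_symm_apply b
        have hc : σ (σ.symm c) = c := σ.apply_symm_apply c
        refine cross_absurd ha hw hac hσ ii ii1 (σ.symm b) (σ.symm c) rfl ?_ ?_ hmax ?_
        · exact Fin.le_def.mpr hle
        · exact Fin.le_def.mpr ih
        · rw [hb, hc]; exact hbc
    have := key (σ ii) (hreach (σ ii1) (σ ii))
    rw [Equiv.symm_apply_apply] at this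
    exact lt_irrefl _ this
  · intro hcons u v
    -- consecutive edges in both directions are present
    have hfwd : ∀ (k : ℕ) (hk : k + 1 < n),
        w (σ ⟨k, Nat.lt_of_succ_lt hk⟩) (σ ⟨k+1, hk⟩) ≠ ⊥ := by
      intro k hk
      exact neBot_of_nonneg (hσ _ _ (Fin.mk_lt_mk.mpr (Nat.lt_succ_self k)))
    have hbwd : ∀ (k : ℕ) (hk : k + 1 < n),
        w (σ ⟨k+1, hk⟩) (σ ⟨k, Nat.lt_of_succ_lt hk⟩) ≠ ⊥ := by
      intro k hk
      intro hbot
      have := ((hw.2 (σ ⟨k+1, hk⟩) (σ ⟨k, Nat.lt_of_succ_lt hk⟩)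
        (fun hh => by have := σ.injective hh; simp [Fin.ext_iff] at this)).2.1).1 hbot
      exact absurd this (ne_of_lt (hcons k hk))
    have h0 : (0 : ℕ) < n := hn
    -- σ 0 reaches everything
    have fwd : ∀ (k : ℕ) (hk : k < n), Reaches w (σ ⟨0, h0⟩) (σ ⟨k, hk⟩) := by
      intro k
      induction k with
      | zero => intro hk; exact Relation.ReflTransGen.refl
      | succ m ih =>
        intro hk
        exact Relation.ReflTransGen.tail (ih (Nat.lt_of_succ_lt hk)) (hfwd m hk)
    -- everything reaches σ 0
    have bwd : ∀ (k : ℕ) (hk : k < n), Reaches w (σ ⟨k, hk⟩) (σ ⟨0, h0⟩) := by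
      intro k
      induction k with
      | zero => intro hk; exact Relation.ReflTransGen.refl
      | succ m ih =>
        intro hk
        exact Relation.ReflTransGen.head (hbwd m hk) (ih (Nat.lt_of_succ_lt hk))
    have hu : Reaches w u (σ ⟨0, h0⟩) := by
      have := bwd (σ.symm u : ℕ) (σ.symm u).isLt
      simpa [Fin.eta, σ.apply_symm_apply] using this
    have hv : Reaches w (σ ⟨0, h0⟩) v := by
      have := fwd (σ.symm v : ℕ) (σ.symm v).isLt
      simpa [Fin.eta, σ.apply_symm_apply] using this
    exact hu.trans hv
end
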